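/- arXiv:1804.02743 — 4 statements merged into one kernel-verified Lean document; each statement's English description precedes it below -/
import Mathlib

section
/- If a vector x of nonnegative integers with n components majorizes a vector y with n components, then for every k with 1 ≤ k ≤ n, the vector x^(k) (consisting of all C(n,k) sums of k distinct components of x, sorted in nonincreasing order) majorizes the vector y^(k). -/
/-!
Between multisets of naturals of the same size, majorization is generated by unit transfers:
if `s` majorizes `t ≠ s`, take a maximal interval `(p, r]` on which the partial sums of the
sorted `t` stay strictly below those of `s`, and move one unit of `t` from position `r` to
position `p`. The result is still sorted, still majorized by `s`, and has strictly larger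
partial sums, so finitely many transfers lead from `t` to `s`.

A transfer `{a, b} ↦ {a + 1, b - 1}` (with `b ≤ a`) acts on the `k`-sums as the pair transfers
`{a + c, b + c} ↦ {a + 1 + c, b - 1 + c}`, one for every `(k - 1)`-sum `c` of the remaining
entries, and leaves the sums containing both `a` and `b` unchanged. Since majorization is
preserved under sums of multisets, the `k`-sums majorize each other along every transfer.
-/

/-- The components of a multiset of naturals, sorted in descending order. -/
def descSort (s : Multiset ℕ) : List ℕ := (s.sort (· ≤ ·)).reverse

/-- `s` majorizes `t`: every partial sum of the descending sort of `s` is at least the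
corresponding partial sum for `t`, and the total sums are equal. -/
def MajorizesM (s t : Multiset ℕ) : Prop :=
  (∀ j : ℕ, ((descSort t).take j).sum ≤ ((descSort s).take j).sum) ∧ t.sum = s.sum

/-- The multiset of values of a vector. -/
def toMul {n : ℕ} (x : Fin n → ℕ) : Multiset ℕ := Multiset.ofList (List.ofFn x)

/-- Majorization of vectors. -/
def Majorizes {n : ℕ} (x y : Fin n → ℕ) : Prop := MajorizesM (toMul x) (toMul y)

/-- `x^(k)`: the multiset of all `C(n,k)` sums of `k` distinct components of `x`. -/
def subsetSums {n : ℕ} (x : Fin n → ℕ) (k : ℕ) : Multiset ℕ :=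
  (Finset.powersetCard k (Finset.univ : Finset (Fin n))).val.map fun B => ∑ i ∈ B, x i

open Finset

def topSum (j : ℕ) (s : Multiset ℕ) : ℕ := ((descSort s).take j).sum

def nthLargest (s : Multiset ℕ) (i : ℕ) : ℕ := (descSort s).getD i 0

lemma pairwise_descSort (s : Multiset ℕ) : (descSort s).Pairwise (· ≥ ·) := by
  rw [descSort, List.pairwise_reverse]
  exact Multiset.pairwise_sort s (· ≤ ·)

@[simp]
lemma coe_descSort (s : Multiset ℕ) : ((descSort s : List ℕ) : Multiset ℕ) = s := by
  rw [descSort, Multiset.coe_reverse, Multiset.sort_eq]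

@[simp]
lemma length_descSort (s : Multiset ℕ) : (descSort s).length = Multiset.card s := by
  rw [descSort, List.length_reverse, Multiset.length_sort]

@[simp]
lemma sum_descSort (s : Multiset ℕ) : (descSort s).sum = s.sum := by
  conv_rhs => rw [← coe_descSort s]
  rfl

lemma descSort_coe_of_pairwise {l : List ℕ} (h : l.Pairwise (· ≥ ·)) : descSort l = l :=
  List.Perm.eq_of_pairwise' (pairwise_descSort _) h (by rw [← Multiset.coe_eq_coe, coe_descSort])

lemma List.sum_take_succ_getD (l : List ℕ) (j : ℕ) :
    (l.take (j + 1)).sum = (l.take j).sum + l.getD j 0 := by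
  rcases lt_or_ge j l.length with hj | hj
  · rw [List.sum_take_succ _ _ hj, List.getD_eq_getElem _ _ hj]
  · rw [List.take_of_length_le (by omega), List.take_of_length_le hj, List.getD_eq_default _ _ hj,
      add_zero]

lemma topSum_eq_sum_range (j : ℕ) (s : Multiset ℕ) :
    topSum j s = ∑ i ∈ range j, nthLargest s i := by
  induction j with
  | zero => simp [topSum]
  | succ j ih => rw [sum_range_succ, ← ih, topSum, topSum, List.sum_take_succ_getD, nthLargest]

lemma nthLargest_antitone (s : Multiset ℕ) : Antitone (nthLargest s) := by
  intro i j hij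
  rcases lt_or_ge j (descSort s).length with hj | hj
  · rw [nthLargest, nthLargest, List.getD_eq_getElem _ _ hj,
      List.getD_eq_getElem _ _ (hij.trans_lt hj)]
    rcases hij.lt_or_eq with hlt | rfl
    · exact List.pairwise_iff_getElem.1 (pairwise_descSort s) _ _ _ _ hlt
    · rfl
  · rw [nthLargest, List.getD_eq_default _ _ hj]
    exact Nat.zero_le _

lemma map_range_nthLargest (s : Multiset ℕ) :
    (Multiset.range (Multiset.card s)).map (nthLargest s) = s := by
  conv_rhs => rw [← coe_descSort s]
  rw [Multiset.range, Multiset.map_coe, Multiset.coe_eq_coe, ← length_descSort]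
  refine (List.Perm.of_eq (List.ext_getElem (by simp) fun i h₁ h₂ => ?_))
  simp [nthLargest, List.getElem?_eq_getElem h₂]

lemma nthLargest_map_range {n : ℕ} {g : ℕ → ℕ} (hg : Antitone g)
    (hzero : ∀ i, n ≤ i → g i = 0) : nthLargest ((Multiset.range n).map g) = g := by
  have hsort : descSort ((Multiset.range n).map g) = (List.range n).map g :=
    descSort_coe_of_pairwise <| List.pairwise_map.2 <|
      (List.pairwise_lt_range (n := n)).imp fun h => hg h.le
  funext i
  rw [nthLargest, hsort]
  rcases lt_or_ge i n with hi | hi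
  · simp [hi]
  · simp [hi, hzero i hi]

lemma topSum_of_card_le (s : Multiset ℕ) {j : ℕ} (h : Multiset.card s ≤ j) :
    topSum j s = s.sum := by
  rw [topSum, List.take_of_length_le (by simpa using h), sum_descSort]

lemma topSum_mono (s : Multiset ℕ) {j j' : ℕ} (h : j ≤ j') : topSum j s ≤ topSum j' s := by
  simp only [topSum_eq_sum_range]
  exact sum_le_sum_of_subset (range_subset_range.2 h)

lemma topSum_succ (j : ℕ) (s : Multiset ℕ) :
    topSum (j + 1) s = topSum j s + nthLargest s j := by
  rw [topSum_eq_sum_range, topSum_eq_sum_range, sum_range_succ]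

lemma nthLargest_of_card_le (s : Multiset ℕ) {i : ℕ} (h : Multiset.card s ≤ i) :
    nthLargest s i = 0 :=
  List.getD_eq_default _ _ (by simpa using h)

lemma eq_of_topSum_eq {s t : Multiset ℕ} (hcard : Multiset.card t = Multiset.card s)
    (h : ∀ j ≤ Multiset.card s, topSum j t = topSum j s) : t = s := by
  rw [← map_range_nthLargest t, ← map_range_nthLargest s, hcard]
  refine Multiset.map_congr rfl fun i hi => ?_
  rw [Multiset.mem_range] at hi
  have h₁ := h (i + 1) hi
  rw [topSum_succ, topSum_succ, h i hi.le] at h₁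
  omega

lemma List.Sublist.sum_le_sum_take {l₁ l₂ : List ℕ} (h : l₁.Sublist l₂)
    (hl₂ : l₂.Pairwise (· ≥ ·)) : l₁.sum ≤ (l₂.take l₁.length).sum := by
  induction h with
  | slnil => simp
  | @cons l₁ l₂ a _ ih =>
    refine (ih hl₂.of_cons).trans ?_
    rcases l₁.length with _ | m
    · simp
    rw [List.take_succ_cons, List.sum_cons]
    rcases lt_or_ge m l₂.length with hm | hm
    · rw [List.sum_take_succ _ _ hm]
      have := List.rel_of_pairwise_cons hl₂ (List.getElem_mem hm)
      omega
    · rw [List.take_of_length_le (by omega), List.take_of_length_le hm]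
      omega
  | cons_cons a _ ih =>
    simpa using ih hl₂.of_cons

lemma sum_le_topSum_card_of_le {u s : Multiset ℕ} (h : u ≤ s) :
    u.sum ≤ topSum (Multiset.card u) s := by
  have hsub : (descSort u).Sublist (descSort s) :=
    List.sublist_of_subperm_of_pairwise (by rw [← Multiset.coe_le]; simpa using h)
      (pairwise_descSort u) (pairwise_descSort s)
  simpa [topSum] using hsub.sum_le_sum_take (pairwise_descSort s)

lemma sum_le_topSum_of_le {u s : Multiset ℕ} (h : u ≤ s) {j : ℕ} (hj : Multiset.card u ≤ j) :
    u.sum ≤ topSum j s :=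
  (sum_le_topSum_card_of_le h).trans (topSum_mono s hj)

lemma exists_le_sum_eq_topSum (j : ℕ) (s : Multiset ℕ) :
    ∃ u ≤ s, Multiset.card u ≤ j ∧ u.sum = topSum j s := by
  refine ⟨(descSort s).take j, ?_, by simp, rfl⟩
  simpa using Multiset.coe_le.2 (List.take_sublist j (descSort s)).subperm

lemma topSum_add_topSum_le (j₁ j₂ : ℕ) (s₁ s₂ : Multiset ℕ) :
    topSum j₁ s₁ + topSum j₂ s₂ ≤ topSum (j₁ + j₂) (s₁ + s₂) := by
  obtain ⟨u₁, hu₁, hc₁, he₁⟩ := exists_le_sum_eq_topSum j₁ s₁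
  obtain ⟨u₂, hu₂, hc₂, he₂⟩ := exists_le_sum_eq_topSum j₂ s₂
  rw [← he₁, ← he₂, ← Multiset.sum_add]
  exact sum_le_topSum_of_le (add_le_add hu₁ hu₂) (by rw [Multiset.card_add]; omega)

namespace MajorizesM

lemma topSum_le {s t : Multiset ℕ} (h : MajorizesM s t) (j : ℕ) : topSum j t ≤ topSum j s :=
  h.1 j

@[refl]
lemma refl (s : Multiset ℕ) : MajorizesM s s := ⟨fun _ => le_rfl, rfl⟩

lemma trans {s t u : Multiset ℕ} (h₁ : MajorizesM s t) (h₂ : MajorizesM t u) : MajorizesM s u :=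
  ⟨fun j => (h₂.topSum_le j).trans (h₁.topSum_le j), h₂.2.trans h₁.2⟩

lemma add {s₁ s₂ t₁ t₂ : Multiset ℕ} (h₁ : MajorizesM s₁ t₁) (h₂ : MajorizesM s₂ t₂) :
    MajorizesM (s₁ + s₂) (t₁ + t₂) := by
  refine ⟨fun j => ?_, by rw [Multiset.sum_add, Multiset.sum_add, h₁.2, h₂.2]⟩
  obtain ⟨u, hu, hcard, hsum⟩ := exists_le_sum_eq_topSum j (t₁ + t₂)
  have hu₂ : u - t₁ ≤ t₂ := tsub_le_iff_left.2 hu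
  have hsplit : u = u ∩ t₁ + (u - t₁) := by rw [add_comm, Multiset.sub_add_inter]
  set u₁ := u ∩ t₁
  set u₂ := u - t₁
  have hcard' : Multiset.card u₁ + Multiset.card u₂ ≤ j := by
    rw [← Multiset.card_add, ← hsplit]; exact hcard
  calc topSum j (t₁ + t₂) = u₁.sum + u₂.sum := by rw [← hsum, ← Multiset.sum_add, ← hsplit]
    _ ≤ topSum (Multiset.card u₁) t₁ + topSum (Multiset.card u₂) t₂ :=
        add_le_add (sum_le_topSum_card_of_le Multiset.inter_le_right)
          (sum_le_topSum_card_of_le hu₂)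
    _ ≤ topSum (Multiset.card u₁) s₁ + topSum (Multiset.card u₂) s₂ :=
        add_le_add (h₁.topSum_le _) (h₂.topSum_le _)
    _ ≤ topSum (Multiset.card u₁ + Multiset.card u₂) (s₁ + s₂) := topSum_add_topSum_le _ _ _ _
    _ ≤ topSum j (s₁ + s₂) := topSum_mono _ hcard'

end MajorizesM

lemma majorizesM_pair {a b a' b' : ℕ} (hba : b ≤ a) (ha : a ≤ a') (hsum : a' + b' = a + b) :
    MajorizesM {a', b'} {a, b} := by
  have hsort : ∀ {x y : ℕ}, y ≤ x → descSort {x, y} = [x, y] := fun hyx =>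
    descSort_coe_of_pairwise (by simpa using hyx)
  refine ⟨fun j => ?_, by simp; omega⟩
  rw [hsort hba, hsort (by omega)]
  rcases j with _ | _ | j <;> simp <;> omega

lemma MajorizesM.cons_cons {a b a' b' : ℕ} {s t : Multiset ℕ} (hba : b ≤ a) (ha : a ≤ a')
    (hsum : a' + b' = a + b) (h : MajorizesM s t) :
    MajorizesM (a' ::ₘ b' ::ₘ s) (a ::ₘ b ::ₘ t) := by
  simpa using (majorizesM_pair hba ha hsum).add h

lemma MajorizesM.map_add_pair {a b a' b' : ℕ} (hba : b ≤ a) (ha : a ≤ a')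
    (hsum : a' + b' = a + b) (M : Multiset ℕ) :
    MajorizesM (M.map (a' + ·) + M.map (b' + ·)) (M.map (a + ·) + M.map (b + ·)) := by
  induction M using Multiset.induction_on with
  | empty => exact refl 0
  | cons c M ih =>
    simp only [Multiset.map_cons, Multiset.cons_add, Multiset.add_cons]
    rw [Multiset.cons_swap (b' + c), Multiset.cons_swap (b + c)]
    exact ih.cons_cons (by omega) (by omega) (by omega)

def kSums (k : ℕ) (s : Multiset ℕ) : Multiset ℕ := (s.powersetCard k).map Multiset.sum

@[simp]
lemma kSums_zero (s : Multiset ℕ) : kSums 0 s = {0} := by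
  simp [kSums]

lemma kSums_succ_cons (k a : ℕ) (s : Multiset ℕ) :
    kSums (k + 1) (a ::ₘ s) = kSums (k + 1) s + (kSums k s).map (a + ·) := by
  simp [kSums, Multiset.powersetCard_cons, Multiset.map_map]

lemma MajorizesM.kSums_transfer {a b : ℕ} (hb : 0 < b) (hba : b ≤ a) (u : Multiset ℕ)
    (k : ℕ) : MajorizesM (kSums k ((a + 1) ::ₘ (b - 1) ::ₘ u)) (kSums k (a ::ₘ b ::ₘ u)) := by
  have hpair := MajorizesM.map_add_pair (a' := a + 1) (b' := b - 1) hba (by omega) (by omega)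
  rcases k with _ | _ | k
  · rw [kSums_zero, kSums_zero]
  · simpa [kSums_succ_cons, add_assoc, add_comm, add_left_comm] using
      (refl (kSums 1 u)).add (hpair {0})
  · simp only [kSums_succ_cons, Multiset.map_add, Multiset.map_map, Function.comp_def]
    have hab : ∀ c, a + 1 + (b - 1 + c) = a + (b + c) := by omega
    simp only [hab]
    convert (refl (kSums (k + 1 + 1) u + (kSums k u).map fun x => a + (b + x))).add
      (hpair (kSums (k + 1) u)) using 1 <;> ac_rfl

def unitTransfer (g : ℕ → ℕ) (p r : ℕ) : ℕ → ℕ :=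
  Function.update (Function.update g p (g p + 1)) r (g r - 1)

lemma unitTransfer_apply (g : ℕ → ℕ) {p r : ℕ} (hpr : p < r) (i : ℕ) :
    unitTransfer g p r i = g i + (if i = p then 1 else 0) - (if i = r then 1 else 0) := by
  simp only [unitTransfer, Function.update_apply]
  split_ifs <;> subst_vars <;> omega

lemma sum_range_unitTransfer {g : ℕ → ℕ} {p r : ℕ} (hpr : p < r) (hr : 0 < g r) (j : ℕ) :
    ∑ i ∈ range j, unitTransfer g p r i = ∑ i ∈ range j, g i + if p < j ∧ j ≤ r then 1 else 0 := by
  induction j with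
  | zero => simp
  | succ j ih =>
    rw [sum_range_succ, sum_range_succ, ih, unitTransfer_apply g hpr]
    split_ifs <;> subst_vars <;> omega

lemma antitone_unitTransfer {g : ℕ → ℕ} (hg : Antitone g) {p r : ℕ} (hpr : p < r)
    (hp : ∀ i < p, g p < g i) (hr : ∀ i, r < i → g i < g r) : Antitone (unitTransfer g p r) := by
  intro i j hij
  have hgij := hg hij
  have hgpr := hg hpr.le
  rw [unitTransfer_apply g hpr, unitTransfer_apply g hpr]
  rcases hij.lt_or_eq with hij | rfl
  · rcases eq_or_ne j p with rfl | hjp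
    · have := hp i hij
      split_ifs <;> omega
    rcases eq_or_ne i r with rfl | hir
    · have := hr j hij
      split_ifs <;> omega
    split_ifs <;> omega
  · rfl

lemma map_range_unitTransfer (g : ℕ → ℕ) {n p r : ℕ} (hpr : p < r) (hrn : r < n) :
    ∃ w, (Multiset.range n).map g = g p ::ₘ g r ::ₘ w ∧
      (Multiset.range n).map (unitTransfer g p r) = (g p + 1) ::ₘ (g r - 1) ::ₘ w := by
  have hnodup := Multiset.nodup_range n
  set rest := ((Multiset.range n).erase p).erase r
  have hrange : Multiset.range n = p ::ₘ r ::ₘ rest := by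
    rw [Multiset.cons_erase (by rw [hnodup.mem_erase_iff]; simp; omega),
      Multiset.cons_erase (by simp; omega)]
  have hrest : ∀ i ∈ rest, unitTransfer g p r i = g i := by
    intro i hi
    rw [(hnodup.erase p).mem_erase_iff, hnodup.mem_erase_iff] at hi
    simp [unitTransfer, hi.1, hi.2.1]
  refine ⟨rest.map g, by rw [hrange, Multiset.map_cons, Multiset.map_cons], ?_⟩
  rw [hrange, Multiset.map_cons, Multiset.map_cons, Multiset.map_congr rfl hrest]
  simp [unitTransfer, hpr.ne]

lemma exists_strict_interval {F G : ℕ → ℕ} {n j₀ : ℕ} (hle : ∀ j, G j ≤ F j) (h0 : G 0 = F 0)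
    (hn : G n = F n) (hj₀ : j₀ ≤ n) (hlt : G j₀ < F j₀) :
    ∃ p r, p < r ∧ r < n ∧ G p = F p ∧ G (r + 1) = F (r + 1) ∧
      ∀ j, p < j → j ≤ r → G j < F j := by
  classical
  set p := Nat.findGreatest (fun j => G j = F j) j₀
  have hp : G p = F p := Nat.findGreatest_spec (P := fun j => G j = F j) (Nat.zero_le j₀) h0
  have hpj₀ : p < j₀ :=
    (Nat.findGreatest_le j₀).lt_of_ne fun h => hlt.ne (h ▸ hp)
  have hp₁ : G (p + 1) ≠ F (p + 1) :=
    Nat.findGreatest_is_greatest (P := fun j => G j = F j) (Nat.lt_succ_self p) hpj₀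
  have hex : ∃ m, p < m ∧ G m = F m := ⟨n, by omega, hn⟩
  obtain ⟨hpm, hm⟩ := Nat.find_spec hex
  have hmn : Nat.find hex ≤ n := Nat.find_min' hex ⟨by omega, hn⟩
  have hmp : Nat.find hex ≠ p + 1 := fun h => hp₁ (h ▸ hm)
  refine ⟨p, Nat.find hex - 1, by omega, by omega, hp, by rwa [Nat.sub_add_cancel (by omega)],
    fun j hpj hjr => (hle j).lt_of_ne fun h => Nat.find_min hex (by omega) ⟨hpj, h⟩⟩

lemma MajorizesM.exists_transfer_positions {s t : Multiset ℕ}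
    (hcard : Multiset.card t = Multiset.card s) (h : MajorizesM s t) (hne : t ≠ s) :
    ∃ p r, p < r ∧ r < Multiset.card t ∧ 0 < nthLargest t r ∧
      (∀ i < p, nthLargest t p < nthLargest t i) ∧
      (∀ i, r < i → nthLargest t i < nthLargest t r) ∧
      ∀ j, p < j → j ≤ r → topSum j t < topSum j s := by
  have hn : topSum (Multiset.card t) t = topSum (Multiset.card t) s := by
    rw [topSum_of_card_le _ le_rfl, topSum_of_card_le _ hcard.ge, h.2]
  obtain ⟨j₀, hj₀, hlt⟩ : ∃ j ≤ Multiset.card t, topSum j t < topSum j s := by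
    by_contra! hcon
    exact hne <| eq_of_topSum_eq hcard fun j hj =>
      le_antisymm (h.topSum_le j) (hcon j (hcard ▸ hj))
  obtain ⟨p, r, hpr, hrn, hp, hr, hstrict⟩ :=
    exists_strict_interval (F := (topSum · s)) (G := (topSum · t)) h.topSum_le rfl hn hj₀ hlt
  have hgp : nthLargest t p < nthLargest s p := by
    have := hstrict (p + 1) (by omega) (by omega)
    rw [topSum_succ, topSum_succ] at this
    omega
  have hgr : nthLargest s r < nthLargest t r := by
    have := hstrict r hpr le_rfl
    rw [topSum_succ, topSum_succ] at hr
    omega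
  refine ⟨p, r, hpr, hrn, by omega, fun i hi => ?_, fun i hi => ?_, hstrict⟩
  · obtain ⟨q, rfl⟩ : ∃ q, p = q + 1 := ⟨p - 1, by omega⟩
    have hq := h.topSum_le q
    rw [topSum_succ, topSum_succ] at hp
    have := nthLargest_antitone t (Nat.le_of_lt_succ hi)
    have := nthLargest_antitone s (Nat.le_add_right q 1)
    omega
  · have hr₁ := h.topSum_le (r + 1 + 1)
    rw [topSum_succ (r + 1), topSum_succ (r + 1), hr] at hr₁
    have := nthLargest_antitone t (show r + 1 ≤ i from hi)
    have := nthLargest_antitone s (Nat.le_add_right r 1)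
    omega

def topSumTotal (s : Multiset ℕ) : ℕ := ∑ j ∈ range (Multiset.card s), topSum j s

lemma MajorizesM.topSumTotal_le {s t : Multiset ℕ} (hcard : Multiset.card t = Multiset.card s)
    (h : MajorizesM s t) : topSumTotal t ≤ topSumTotal s := by
  rw [topSumTotal, topSumTotal, hcard]
  exact sum_le_sum fun j _ => h.topSum_le j

lemma MajorizesM.exists_transfer {s t : Multiset ℕ} (hcard : Multiset.card t = Multiset.card s)
    (h : MajorizesM s t) (hne : t ≠ s) :
    ∃ a b w, 0 < b ∧ b ≤ a ∧ t = a ::ₘ b ::ₘ w ∧ MajorizesM s ((a + 1) ::ₘ (b - 1) ::ₘ w) ∧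
      topSumTotal t < topSumTotal ((a + 1) ::ₘ (b - 1) ::ₘ w) := by
  obtain ⟨p, r, hpr, hrn, hr0, hp, hr, hstrict⟩ := h.exists_transfer_positions hcard hne
  set g := nthLargest t
  set t' := (Multiset.range (Multiset.card t)).map (unitTransfer g p r)
  obtain ⟨w, ht, ht'⟩ := map_range_unitTransfer g hpr hrn
  rw [map_range_nthLargest] at ht
  have hg' : nthLargest t' = unitTransfer g p r :=
    nthLargest_map_range (antitone_unitTransfer (nthLargest_antitone t) hpr hp hr) fun i hi => by
      rw [unitTransfer_apply g hpr, show g i = 0 from nthLargest_of_card_le t hi, if_neg (by omega),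
        if_neg (by omega)]
  have htop : ∀ j, topSum j t' = topSum j t + if p < j ∧ j ≤ r then 1 else 0 := fun j => by
    rw [topSum_eq_sum_range, topSum_eq_sum_range, hg', sum_range_unitTransfer hpr hr0]
  have hcard' : Multiset.card t' = Multiset.card t := by simp [t']
  refine ⟨g p, g r, w, hr0, nthLargest_antitone t hpr.le, ht, ?_, ?_⟩ <;> rw [← ht']
  · refine ⟨fun j => ?_, ?_⟩
    · change topSum j t' ≤ topSum j s
      rw [htop]
      split_ifs with hj
      · exact hstrict j hj.1 hj.2
      · simpa using h.topSum_le j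
    · rw [← topSum_of_card_le t' hcard'.le, htop, if_neg (by omega), add_zero,
        topSum_of_card_le t le_rfl, h.2]
  · rw [topSumTotal, topSumTotal, hcard']
    refine sum_lt_sum (fun j _ => by rw [htop]; omega) ⟨r, mem_range.2 hrn, ?_⟩
    rw [htop, if_pos ⟨hpr, le_rfl⟩]
    omega

theorem majorizesM_kSums {s t : Multiset ℕ} (hcard : Multiset.card t = Multiset.card s)
    (h : MajorizesM s t) (k : ℕ) : MajorizesM (kSums k s) (kSums k t) := by
  by_cases hne : t = s
  · rw [hne]
  obtain ⟨a, b, w, hb, hba, rfl, hs, hlt⟩ := h.exists_transfer hcard hne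
  have hcard' : Multiset.card ((a + 1) ::ₘ (b - 1) ::ₘ w) = Multiset.card s := by
    simpa using hcard
  have := hs.topSumTotal_le hcard'
  exact (majorizesM_kSums hcard' hs k).trans (MajorizesM.kSums_transfer hb hba w k)
termination_by topSumTotal s - topSumTotal t
decreasing_by omega

lemma toMul_eq_map_univ {n : ℕ} (x : Fin n → ℕ) :
    toMul x = (Finset.univ : Finset (Fin n)).val.map x := by
  rw [toMul, List.ofFn_eq_map]
  rfl

lemma subsetSums_eq_kSums {n : ℕ} (x : Fin n → ℕ) (k : ℕ) :
    subsetSums x k = kSums k (toMul x) := by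
  rw [toMul_eq_map_univ, kSums, Multiset.powersetCard_map, Multiset.map_map,
    ← Finset.map_val_val_powersetCard, Multiset.map_map]
  rfl

theorem stmt4_general (n k : ℕ) (x y : Fin n → ℕ)
    (h : Majorizes x y) : MajorizesM (subsetSums x k) (subsetSums y k) := by
  rw [subsetSums_eq_kSums, subsetSums_eq_kSums]
  exact majorizesM_kSums (by simp [toMul]) h k

/-- If `x` majorizes `y`, then for every `1 ≤ k ≤ n` the vector `x^(k)` of all sums of `k`
distinct components of `x` majorizes `y^(k)`. -/
theorem stmt4 (n k : ℕ) (hk1 : 1 ≤ k) (hk2 : k ≤ n) (x y : Fin n → ℕ)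
    (h : Majorizes x y) : MajorizesM (subsetSums x k) (subsetSums y k) :=
  stmt4_general n k x y h
end

section
/- Let U be any tournament on vertices b_1,...,b_n, let W be the transitive tournament on d_1,...,d_n with d_i dominating d_j for i < j (so deg_W(d_i) = n - i), let c > 0 with n > c, and fix k with 1 ≤ k ≤ n-1. Then Σ over k-element subsets B of {1,...,n} of ((n-c)/c)^(Σ_{i∈B} deg_U(b_i)) ≤ Σ over k-element subsets B of ((n-c)/c)^(Σ_{i∈B} (n-i)). -/
/-- A tournament on `n` vertices, encoded as a Boolean dominance matrix:
`T i j = true` means `i` dominates `j`. -/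
def IsTournament {n : ℕ} (T : Fin n → Fin n → Bool) : Prop :=
  (∀ i, T i i = false) ∧ ∀ i j, i ≠ j → T i j = !T j i

/-- Outdegree of a vertex: the number of vertices it dominates. -/
def outdeg {n : ℕ} (T : Fin n → Fin n → Bool) (i : Fin n) : ℕ :=
  (Finset.univ.filter fun j => T i j = true).card
lemma scalar_swap {x : ℝ} (hx : 0 < x) {a b : ℕ} (h1 : 1 ≤ a) (h : a ≤ b) :
    x ^ a + x ^ b ≤ x ^ (a - 1) + x ^ (b + 1) := by
  obtain ⟨a, rfl⟩ : ∃ a', a = a' + 1 := ⟨a - 1, by omega⟩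
  simp only [Nat.add_sub_cancel]
  rw [pow_succ, pow_succ]
  rcases le_total x 1 with hx1 | hx1
  · nlinarith [pow_le_pow_of_le_one hx.le hx1 (show a ≤ b by omega)]
  · nlinarith [pow_le_pow_right₀ hx1 (show a ≤ b by omega), pow_pos hx a]

section PQ
variable {n k : ℕ} {i j : Fin n}

lemma pq_main (x : ℝ) (hx : 0 < x) (D D' : Fin n → ℕ)
    (hij : i ≠ j) (hDi : 1 ≤ D i) (hle : D i ≤ D j)
    (h'i : D' i = D i - 1) (h'j : D' j = D j + 1)
    (hrest : ∀ a, a ≠ i → a ≠ j → D' a = D a) :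
    ∀ (P Q : Finset (Finset (Fin n)))
      (hP : ∀ B, B ∈ P ↔ (B.card = k ∧ i ∈ B ∧ j ∉ B))
      (hQ : ∀ B, B ∈ Q ↔ (B.card = k ∧ j ∈ B ∧ i ∉ B)),
      (∑ B ∈ P, x ^ (∑ a ∈ B, D a)) + (∑ B ∈ Q, x ^ (∑ a ∈ B, D a))
        ≤ (∑ B ∈ P, x ^ (∑ a ∈ B, D' a)) + (∑ B ∈ Q, x ^ (∑ a ∈ B, D' a)) := by
  intro P Q hP hQ
  have hmapmem : ∀ B ∈ Q, insert i (B.erase j) ∈ P := by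
    intro B hB
    rw [hQ] at hB
    rw [hP]
    refine ⟨?_, Finset.mem_insert_self _ _, ?_⟩
    · rw [Finset.card_insert_of_notMem (fun h => hB.2.2 (Finset.mem_of_mem_erase h)),
        Finset.card_erase_of_mem hB.2.1]
      have : 1 ≤ B.card := Finset.card_pos.2 ⟨j, hB.2.1⟩
      omega
    · simp only [Finset.mem_insert, Finset.mem_erase]
      push_neg
      exact ⟨Ne.symm hij, fun h => absurd rfl h⟩
  have hmapmem' : ∀ B ∈ P, insert j (B.erase i) ∈ Q := by
    intro B hB
    rw [hP] at hB
    rw [hQ]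
    refine ⟨?_, Finset.mem_insert_self _ _, ?_⟩
    · rw [Finset.card_insert_of_notMem (fun h => hB.2.2 (Finset.mem_of_mem_erase h)),
        Finset.card_erase_of_mem hB.2.1]
      have : 1 ≤ B.card := Finset.card_pos.2 ⟨i, hB.2.1⟩
      omega
    · simp only [Finset.mem_insert, Finset.mem_erase]
      push_neg
      exact ⟨hij, fun h => absurd rfl h⟩
  have hinv : ∀ B ∈ Q, insert j ((insert i (B.erase j)).erase i) = B := by
    intro B hB
    rw [hQ] at hB
    rw [Finset.erase_insert (fun h => hB.2.2 (Finset.mem_of_mem_erase h)),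
      Finset.insert_erase hB.2.1]
  have hinv' : ∀ B ∈ P, insert i ((insert j (B.erase i)).erase j) = B := by
    intro B hB
    rw [hP] at hB
    rw [Finset.erase_insert (fun h => hB.2.2 (Finset.mem_of_mem_erase h)),
      Finset.insert_erase hB.2.1]
  have reindex : ∀ E : Fin n → ℕ,
      ∑ B ∈ Q, x ^ (∑ a ∈ B, E a) = ∑ B ∈ P, x ^ (∑ a ∈ insert j (B.erase i), E a) := by
    intro E
    refine Finset.sum_nbij' (fun B => insert i (B.erase j)) (fun B => insert j (B.erase i))
      hmapmem hmapmem' hinv hinv' ?_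
    intro B hB
    rw [hinv B hB]
  rw [reindex D, reindex D', ← Finset.sum_add_distrib, ← Finset.sum_add_distrib]
  apply Finset.sum_le_sum
  intro B hB
  rw [hP] at hB
  obtain ⟨hcard, hiB, hjB⟩ := hB
  have hjBe : j ∉ B.erase i := fun h => hjB (Finset.mem_of_mem_erase h)
  have e1 : ∑ a ∈ B, D a = D i + ∑ a ∈ B.erase i, D a := (Finset.add_sum_erase _ D hiB).symm
  have e1' : ∑ a ∈ B, D' a = D' i + ∑ a ∈ B.erase i, D' a := (Finset.add_sum_erase _ D' hiB).symm
  have e2 : ∑ a ∈ insert j (B.erase i), D a = D j + ∑ a ∈ B.erase i, D a :=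
    Finset.sum_insert hjBe
  have e2' : ∑ a ∈ insert j (B.erase i), D' a = D' j + ∑ a ∈ B.erase i, D' a :=
    Finset.sum_insert hjBe
  have erest : ∑ a ∈ B.erase i, D' a = ∑ a ∈ B.erase i, D a := by
    apply Finset.sum_congr rfl
    intro a ha
    exact hrest a (Finset.ne_of_mem_erase ha) (fun h => hjBe (h ▸ ha))
  rw [e1, e1', e2, e2', erest, h'i, h'j]
  set S := ∑ a ∈ B.erase i, D a
  rw [pow_add, pow_add, pow_add, pow_add]
  have hsc := scalar_swap hx hDi hle
  nlinarith [pow_pos hx S]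
end PQ

lemma swap_le (n k : ℕ) (x : ℝ) (hx : 0 < x) (D D' : Fin n → ℕ) (i j : Fin n)
    (hij : i ≠ j) (hDi : 1 ≤ D i) (hle : D i ≤ D j)
    (h'i : D' i = D i - 1) (h'j : D' j = D j + 1)
    (hrest : ∀ a, a ≠ i → a ≠ j → D' a = D a) :
    ∑ B ∈ Finset.powersetCard k (Finset.univ : Finset (Fin n)), x ^ (∑ a ∈ B, D a)
      ≤ ∑ B ∈ Finset.powersetCard k (Finset.univ : Finset (Fin n)), x ^ (∑ a ∈ B, D' a) := by
  classical
  set s := Finset.powersetCard k (Finset.univ : Finset (Fin n)) with hs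
  have split : ∀ f : Finset (Fin n) → ℝ,
      ∑ B ∈ s, f B
        = (∑ B ∈ s.filter (fun B => i ∈ B ∧ j ∉ B), f B)
          + ((∑ B ∈ (s.filter (fun B => ¬(i ∈ B ∧ j ∉ B))).filter (fun B => j ∈ B ∧ i ∉ B), f B)
          + ∑ B ∈ (s.filter (fun B => ¬(i ∈ B ∧ j ∉ B))).filter (fun B => ¬(j ∈ B ∧ i ∉ B)), f B) := by
    intro f
    rw [Finset.sum_filter_add_sum_filter_not (s.filter (fun B => ¬(i ∈ B ∧ j ∉ B))) (fun B => j ∈ B ∧ i ∉ B) f,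
      Finset.sum_filter_add_sum_filter_not s (fun B => i ∈ B ∧ j ∉ B) f]
  rw [split, split]
  have hR : ∑ B ∈ (s.filter (fun B => ¬(i ∈ B ∧ j ∉ B))).filter (fun B => ¬(j ∈ B ∧ i ∉ B)),
        x ^ (∑ a ∈ B, D a)
      = ∑ B ∈ (s.filter (fun B => ¬(i ∈ B ∧ j ∉ B))).filter (fun B => ¬(j ∈ B ∧ i ∉ B)),
        x ^ (∑ a ∈ B, D' a) := by
    apply Finset.sum_congr rfl
    intro B hB
    simp only [Finset.mem_filter] at hB
    obtain ⟨⟨_, h1⟩, h2⟩ := hB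
    by_cases hiB : i ∈ B
    · have hjB : j ∈ B := by tauto
      congr 1
      rw [← Finset.add_sum_erase _ D hiB, ← Finset.add_sum_erase _ D' hiB,
        ← Finset.add_sum_erase _ D (Finset.mem_erase.2 ⟨Ne.symm hij, hjB⟩),
        ← Finset.add_sum_erase _ D' (Finset.mem_erase.2 ⟨Ne.symm hij, hjB⟩)]
      have : ∑ a ∈ (B.erase i).erase j, D' a = ∑ a ∈ (B.erase i).erase j, D a := by
        apply Finset.sum_congr rfl
        intro a ha
        simp only [Finset.mem_erase] at ha
        exact hrest a ha.2.1 ha.1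
      rw [this]; omega
    · have hjB : j ∉ B := by tauto
      congr 1
      apply Finset.sum_congr rfl
      intro a ha
      exact (hrest a (fun h => hiB (h ▸ ha)) (fun h => hjB (h ▸ ha))).symm
  rw [hR]
  have hmemP : ∀ B, B ∈ s.filter (fun B => i ∈ B ∧ j ∉ B) ↔ (B.card = k ∧ i ∈ B ∧ j ∉ B) := by
    intro B
    simp [hs, Finset.mem_filter, Finset.mem_powersetCard_univ, and_comm]
  have hmemQ : ∀ B, B ∈ (s.filter (fun B => ¬(i ∈ B ∧ j ∉ B))).filter (fun B => j ∈ B ∧ i ∉ B)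
      ↔ (B.card = k ∧ j ∈ B ∧ i ∉ B) := by
    intro B
    simp only [Finset.mem_filter, Finset.mem_powersetCard_univ, hs]
    tauto
  have := pq_main (k := k) x hx D D' hij hDi hle h'i h'j hrest _ _ hmemP hmemQ
  linarith
def flipE {n : ℕ} (T : Fin n → Fin n → Bool) (i j : Fin n) : Fin n → Fin n → Bool :=
  fun a b => if a = i ∧ b = j then false else if a = j ∧ b = i then true else T a b

lemma flip_isTournament {n : ℕ} {T : Fin n → Fin n → Bool} {i j : Fin n}
    (hT : IsTournament T) (hij : i ≠ j) : IsTournament (flipE T i j) := by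
  constructor
  · intro a
    by_cases hai : a = i <;> by_cases haj : a = j <;> simp_all [flipE, hT.1]
  · intro a b hab
    have h2 := hT.2 a b hab
    by_cases hai : a = i <;> by_cases haj : a = j <;> by_cases hbi : b = i <;>
      by_cases hbj : b = j <;> subst_vars <;> simp_all [flipE]

lemma outdeg_flip_i {n : ℕ} {T : Fin n → Fin n → Bool} {i j : Fin n}
    (hij : i ≠ j) (hTij : T i j = true) :
    outdeg (flipE T i j) i = outdeg T i - 1 := by
  have : (Finset.univ.filter fun b => flipE T i j i b = true)
      = (Finset.univ.filter fun b => T i b = true).erase j := by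
    ext b
    by_cases hbj : b = j <;> simp_all [flipE, hij]
  rw [outdeg, this, Finset.card_erase_of_mem (by simp [hTij]), outdeg]

lemma outdeg_flip_j {n : ℕ} {T : Fin n → Fin n → Bool} {i j : Fin n}
    (hT : IsTournament T) (hij : i ≠ j) (hTij : T i j = true) :
    outdeg (flipE T i j) j = outdeg T j + 1 := by
  have hTji : T j i = false := by rw [hT.2 j i (Ne.symm hij), hTij]; rfl
  have : (Finset.univ.filter fun b => flipE T i j j b = true)
      = insert i (Finset.univ.filter fun b => T j b = true) := by
    ext b
    by_cases hbi : b = i <;> simp_all [flipE, Ne.symm hij]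
  rw [outdeg, this, Finset.card_insert_of_notMem (by simp [hTji]), outdeg]

lemma outdeg_flip_other {n : ℕ} {T : Fin n → Fin n → Bool} {i j a : Fin n}
    (hai : a ≠ i) (haj : a ≠ j) :
    outdeg (flipE T i j) a = outdeg T a := by
  have : (Finset.univ.filter fun b => flipE T i j a b = true)
      = Finset.univ.filter fun b => T a b = true := by
    ext b
    simp [flipE, hai, haj]
  rw [outdeg, this, outdeg]

lemma outdeg_le {n : ℕ} {T : Fin n → Fin n → Bool} (hT : IsTournament T) (a : Fin n) :
    outdeg T a ≤ n - 1 := by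
  have : (Finset.univ.filter fun b => T a b = true) ⊆ Finset.univ.erase a := by
    intro b hb
    simp only [Finset.mem_filter] at hb
    refine Finset.mem_erase.2 ⟨?_, Finset.mem_univ _⟩
    intro h
    rw [h, hT.1 a] at hb
    simp at hb
  have := Finset.card_le_card this
  rwa [Finset.card_erase_of_mem (Finset.mem_univ a), Finset.card_univ, Fintype.card_fin] at this

lemma outdeg_pos {n : ℕ} {T : Fin n → Fin n → Bool} {i j : Fin n} (hTij : T i j = true) :
    1 ≤ outdeg T i :=
  Finset.card_pos.2 ⟨j, by simp [hTij]⟩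
lemma perm_case (n k : ℕ) (x : ℝ) (hn : 1 ≤ n) (D : Fin n → ℕ) (hle : ∀ a, D a ≤ n - 1)
    (hinj : Function.Injective D) :
    ∑ B ∈ Finset.powersetCard k (Finset.univ : Finset (Fin n)), x ^ (∑ a ∈ B, D a)
      = ∑ B ∈ Finset.powersetCard k (Finset.univ : Finset (Fin n)),
          x ^ (∑ a ∈ B, (n - 1 - (a : ℕ))) := by
  classical
  set f : Fin n → Fin n := fun a => (⟨D a, by have := hle a; omega⟩ : Fin n).rev with hf
  have hfinj : Function.Injective f := by
    intro a b h
    apply hinj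
    have := Fin.rev_injective h
    exact congrArg Fin.val this
  have hbij : Function.Bijective f := (Finite.injective_iff_bijective).1 hfinj
  set e : Fin n ≃ Fin n := Equiv.ofBijective f hbij with he
  have hfd : ∀ a, n - 1 - ((e a : Fin n) : ℕ) = D a := by
    intro a
    have : ((e a : Fin n) : ℕ) = n - (D a + 1) := Fin.val_rev _
    rw [this]
    have := hle a
    omega
  refine Finset.sum_nbij' (fun B => B.image e) (fun B => B.image e.symm) ?_ ?_ ?_ ?_ ?_
  · intro B hB
    simp only [Finset.mem_powersetCard_univ] at hB ⊢
    rw [Finset.card_image_of_injective _ e.injective, hB]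
  · intro B hB
    simp only [Finset.mem_powersetCard_univ] at hB ⊢
    rw [Finset.card_image_of_injective _ e.symm.injective, hB]
  · intro B _
    simp [Finset.image_image]
  · intro B _
    simp [Finset.image_image]
  · intro B _
    rw [Finset.sum_image (fun a _ b _ h => e.injective h)]
    congr 1
    exact (Finset.sum_congr rfl (fun a _ => hfd a)).symm
lemma main_aux (n k : ℕ) (x : ℝ) (hx : 0 < x) (hn : 1 ≤ n) :
    ∀ m : ℕ, ∀ T : Fin n → Fin n → Bool, IsTournament T →
      n ^ 3 ≤ m + ∑ a : Fin n, (outdeg T a) ^ 2 →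
      ∑ B ∈ Finset.powersetCard k (Finset.univ : Finset (Fin n)), x ^ (∑ a ∈ B, outdeg T a)
        ≤ ∑ B ∈ Finset.powersetCard k (Finset.univ : Finset (Fin n)),
            x ^ (∑ a ∈ B, (n - 1 - (a : ℕ))) := by
  intro m
  induction m with
  | zero =>
    intro T hT hsum
    exfalso
    have h1 : ∑ a : Fin n, (outdeg T a) ^ 2 ≤ ∑ _a : Fin n, (n - 1) ^ 2 :=
      Finset.sum_le_sum (fun a _ => Nat.pow_le_pow_left (outdeg_le hT a) 2)
    rw [Finset.sum_const, Finset.card_univ, Fintype.card_fin, smul_eq_mul] at h1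
    have h2 : (n - 1) ^ 2 < n ^ 2 := Nat.pow_lt_pow_left (by omega) (by norm_num)
    have h3 : n * (n - 1) ^ 2 < n * n ^ 2 := by nlinarith
    have h4 : n * n ^ 2 = n ^ 3 := by ring
    omega
  | succ m ih =>
    intro T hT hsum
    by_cases hex : ∃ i j, T i j = true ∧ outdeg T i ≤ outdeg T j
    · obtain ⟨i, j, hTij, hle⟩ := hex
      have hij : i ≠ j := by
        intro h
        rw [h, hT.1 j] at hTij
        simp at hTij
      have hT' : IsTournament (flipE T i j) := flip_isTournament hT hij
      have hdi1 : 1 ≤ outdeg T i := outdeg_pos hTij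
      have h'i : outdeg (flipE T i j) i = outdeg T i - 1 := outdeg_flip_i hij hTij
      have h'j : outdeg (flipE T i j) j = outdeg T j + 1 := outdeg_flip_j hT hij hTij
      have hrest : ∀ a, a ≠ i → a ≠ j → outdeg (flipE T i j) a = outdeg T a :=
        fun a hai haj => outdeg_flip_other hai haj
      have step1 := swap_le n k x hx (outdeg T) (outdeg (flipE T i j)) i j hij hdi1 hle
        h'i h'j hrest
      have hsum' : n ^ 3 ≤ m + ∑ a : Fin n, (outdeg (flipE T i j) a) ^ 2 := by
        have hjmem : j ∈ Finset.univ.erase i :=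
          Finset.mem_erase.2 ⟨Ne.symm hij, Finset.mem_univ j⟩
        have dec : ∀ g : Fin n → ℕ, ∑ a : Fin n, g a
            = g i + (g j + ∑ a ∈ (Finset.univ.erase i).erase j, g a) := by
          intro g
          rw [Finset.add_sum_erase _ g hjmem, Finset.add_sum_erase _ g (Finset.mem_univ i)]
        have hrest2 : ∑ a ∈ (Finset.univ.erase i).erase j, (outdeg (flipE T i j) a) ^ 2
            = ∑ a ∈ (Finset.univ.erase i).erase j, (outdeg T a) ^ 2 := by
          apply Finset.sum_congr rfl
          intro a ha
          simp only [Finset.mem_erase] at ha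
          rw [hrest a ha.2.1 ha.1]
        rw [dec (fun a => (outdeg (flipE T i j) a) ^ 2), hrest2]
        rw [dec (fun a => (outdeg T a) ^ 2)] at hsum
        rw [h'i, h'j]
        obtain ⟨di, hdi⟩ : ∃ d, outdeg T i = d + 1 := ⟨outdeg T i - 1, by omega⟩
        rw [hdi] at hsum hle ⊢
        simp only [Nat.add_sub_cancel]
        nlinarith [hsum, hle]
      exact le_trans step1 (ih (flipE T i j) hT' hsum')
    · push_neg at hex
      have hinj : Function.Injective (outdeg T) := by
        intro a b hab
        by_contra hne
        have h2 := hT.2 a b hne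
        cases hba : T b a with
        | true => exact absurd hab.symm.le (Nat.not_le.2 (hex b a hba))
        | false =>
          have : T a b = true := by rw [h2, hba]; rfl
          exact absurd hab.le (Nat.not_le.2 (hex a b this))
      rw [perm_case n k x hn (outdeg T) (outdeg_le hT) hinj]
/-- For any tournament `U` on `b_1, …, b_n`, with `W` the transitive tournament
(`deg_W(d_i) = n - i`, here `n - 1 - i` in 0-indexed form), `0 < c < n` and `1 ≤ k ≤ n-1`:
the sum over `k`-element subsets `B` of `((n-c)/c)^(Σ_{i∈B} deg_U(b_i))` is at most the
corresponding sum with the transitive degrees `n - i`. -/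
theorem stmt6 (n k : ℕ) (c : ℝ) (hc : 0 < c) (hcn : c < n)
    (T : Fin n → Fin n → Bool) (hT : IsTournament T)
    (hk1 : 1 ≤ k) (hk2 : k ≤ n - 1) :
    ∑ B ∈ Finset.powersetCard k (Finset.univ : Finset (Fin n)),
        (((n : ℝ) - c) / c) ^ (∑ i ∈ B, outdeg T i)
      ≤ ∑ B ∈ Finset.powersetCard k (Finset.univ : Finset (Fin n)),
        (((n : ℝ) - c) / c) ^ (∑ i ∈ B, (n - 1 - (i : ℕ))) := by

  have hn : 1 ≤ n := by
    by_contra h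
    have : n = 0 := by omega
    subst this
    simp at hcn
    linarith
  have hx : 0 < ((n : ℝ) - c) / c := div_pos (by linarith) hc
  exact main_aux n k _ hx hn (n ^ 3) T hT (Nat.le_add_right _ _)
end

section
/- Assume a random tournament T on n alternatives is generated by independently orienting each edge, with the edge from a_i to a_j (for i < j) present with probability p_{i,j} ∈ [f(n), 1 − f(n)], where f(n) ≤ 1/2 and f(n) ∈ ω(1/n). Then the probability that T is strongly connected (equivalently, that the top cycle TC(T) equals the whole set of alternatives) tends to 1 as n → ∞. -/
/-- The set of (unordered) edges of a tournament on `n` alternatives, represented by the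
ordered pairs `(i, j)` with `i < j`. -/
abbrev Edges (n : ℕ) := {q : Fin n × Fin n // q.1 < q.2}

/-- An orientation of all edges: `σ e = true` means the edge `e = (i, j)` (with `i < j`)
is oriented from `a_i` to `a_j`. A tournament is exactly such an orientation. -/
abbrev Orient (n : ℕ) := Edges n → Bool

/-- `a_i` dominates `a_j` in the tournament given by the orientation `σ`. -/
def beats {n : ℕ} (σ : Orient n) (i j : Fin n) : Prop :=
  (∃ h : i < j, σ ⟨(i, j), h⟩ = true) ∨ (∃ h : j < i, σ ⟨(j, i), h⟩ = false)

/-- The probability of obtaining the particular tournament `σ` when each edge `(i, j)`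
(`i < j`) is independently oriented from `a_i` to `a_j` with probability `p i j`. -/
noncomputable def prOf {n : ℕ} (p : Fin n → Fin n → ℝ) (σ : Orient n) : ℝ :=
  ∏ e : Edges n, if σ e = true then p e.1.1 e.1.2 else 1 - p e.1.1 e.1.2

/-- The probability of the event `E` under the independent-edge random tournament model
with edge probabilities `p`. -/
noncomputable def Pr {n : ℕ} (p : Fin n → Fin n → ℝ) (E : Set (Orient n)) : ℝ :=
  ∑ σ : Orient n, E.indicator (prOf p) σ

/-!
If the tournament is not strongly connected, the vertices not reachable from some vertex form a
nonempty proper set `S` dominating its complement, and `P(S dominates) = ∏_{u ∈ S, w ∉ S} P(u → w)`.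
With `φ = min f(n) (1/8)` every factor is at most `c = 1 - φ`, and at most `1/2 ≤ c · (7/8)²` when
`u → w` goes against the majority tournament (each edge oriented its more likely way). So the
sets of size `k` contribute at most `c^{k(n-k)} ∑_{#S = k} (7/8)^{2 e(S)}`, where `e(S)` counts
majority edges entering `S`. For any tournament this sum is at most `8^{min(k, n-k)}`: by
induction, removing a vertex of in-degree at least `(#A - 1)/2`. As `k(n-k) ≥ ⌊n/2⌋ min(k, n-k)`,
the union bound is a geometric series in `ρ = 8 c^{⌊n/2⌋} ≤ 8 exp(-φ ⌊n/2⌋)`, and `ρ → 0`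
because `n φ → ∞`.
-/

open Finset

section Tournament

variable {V : Type*}

def IsTournamentOn (r : V → V → Bool) (A : Finset V) : Prop :=
  ∀ u ∈ A, ∀ v ∈ A, u ≠ v → r u v = !r v u

lemma IsTournamentOn.mono {r : V → V → Bool} {A B : Finset V} (h : IsTournamentOn r A)
    (hBA : B ⊆ A) : IsTournamentOn r B :=
  fun u hu v hv => h u (hBA hu) v (hBA hv)

lemma IsTournamentOn.swap {r : V → V → Bool} {A : Finset V} (h : IsTournamentOn r A) :
    IsTournamentOn (Function.swap r) A :=
  fun u hu v hv huv => by simp [Function.swap, h v hv u hu huv.symm]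

variable [DecidableEq V]

def numEntering (r : V → V → Bool) (A S : Finset V) : ℕ :=
  ∑ w ∈ S, #{u ∈ A \ S | r u w}

noncomputable def enteringSum (x : ℝ) (r : V → V → Bool) (A : Finset V) (k : ℕ) : ℝ :=
  ∑ S ∈ A.powersetCard k, x ^ (2 * numEntering r A S)

variable {r : V → V → Bool} {A : Finset V} {x : ℝ}

lemma numEntering_swap_sdiff {S : Finset V} (hS : S ⊆ A) :
    numEntering (Function.swap r) A (A \ S) = numEntering r A S := by
  simp only [numEntering, Finset.sdiff_sdiff_eq_self hS, card_filter, Function.swap]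
  exact sum_comm

lemma enteringSum_swap {k : ℕ} (hk : k ≤ #A) :
    enteringSum x r A k = enteringSum x (Function.swap r) A (#A - k) := by
  refine sum_nbij' (A \ ·) (A \ ·) (fun S hS => ?_) (fun S hS => ?_)
    (fun S hS => ?_) (fun S hS => ?_) (fun S hS => ?_) <;>
    simp only [mem_powersetCard] at hS ⊢
  · exact ⟨sdiff_subset, by rw [card_sdiff_of_subset hS.1, hS.2]⟩
  · exact ⟨sdiff_subset, by rw [card_sdiff_of_subset hS.1, hS.2]; omega⟩
  · exact Finset.sdiff_sdiff_eq_self hS.1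
  · exact Finset.sdiff_sdiff_eq_self hS.1
  · rw [numEntering_swap_sdiff hS.1]

lemma enteringSum_zero : enteringSum x r A 0 = 1 := by
  simp [enteringSum, numEntering]

lemma card_filter_erase_eq_sum (P : V → Prop) [DecidablePred P] (v : V) :
    #{u ∈ A.erase v | P u} = ∑ u ∈ A, if u ≠ v ∧ P u then 1 else 0 := by
  rw [← filter_ne' A v, filter_filter, card_filter]

lemma IsTournamentOn.exists_card_le_two_mul_inDegree (hr : IsTournamentOn r A)
    (hA : A.Nonempty) : ∃ v ∈ A, #A ≤ 2 * #{u ∈ A.erase v | r u v} + 1 := by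
  have in_add_out : ∀ v ∈ A, #{u ∈ A.erase v | r u v} + #{u ∈ A.erase v | r v u} = #A - 1 := by
    intro v hv
    have : #{u ∈ A.erase v | r v u} = #{u ∈ A.erase v | ¬ r u v} := by
      congr 1
      refine filter_congr fun u hu => ?_
      rw [hr v hv u (mem_of_mem_erase hu) (ne_of_mem_erase hu).symm]
      simp
    rw [this, card_filter_add_card_filter_not, card_erase_of_mem hv]
  have sum_in_eq_sum_out :
      ∑ v ∈ A, #{u ∈ A.erase v | r u v} = ∑ v ∈ A, #{u ∈ A.erase v | r v u} := by
    simp only [card_filter_erase_eq_sum]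
    rw [sum_comm]
    exact sum_congr rfl fun _ _ => sum_congr rfl fun _ _ => by simp only [ne_comm]
  have : ∑ v ∈ A, (#A - 1) ≤ ∑ v ∈ A, 2 * #{u ∈ A.erase v | r u v} := by
    rw [← sum_congr rfl in_add_out, sum_add_distrib, ← sum_in_eq_sum_out, ← sum_add_distrib]
    exact sum_le_sum fun v _ => by omega
  obtain ⟨v, hv, hle⟩ := exists_le_of_sum_le hA this
  exact ⟨v, hv, by omega⟩

lemma numEntering_insert {v : V} {S : Finset V} (hS : S ⊆ A.erase v) :
    numEntering r A (insert v S) = #{u ∈ A \ insert v S | r u v} + numEntering r (A.erase v) S := by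
  have hvS : v ∉ S := fun h => (mem_erase.mp (hS h)).1 rfl
  rw [numEntering, sum_insert hvS, numEntering, sdiff_insert, erase_sdiff_comm]

lemma numEntering_mono {B S : Finset V} (hBA : B ⊆ A) :
    numEntering r B S ≤ numEntering r A S :=
  sum_le_sum fun _ _ => card_le_card (filter_subset_filter _ (sdiff_subset_sdiff hBA le_rfl))

lemma card_filter_erase_le (v : V) (S : Finset V) :
    #{u ∈ A.erase v | r u v} ≤ #{u ∈ A \ insert v S | r u v} + #S := by
  have : A.erase v ⊆ (A \ insert v S) ∪ S := by
    intro u; simp only [mem_erase, mem_union, mem_sdiff, mem_insert]; tauto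
  calc #{u ∈ A.erase v | r u v} ≤ #{u ∈ (A \ insert v S) ∪ S | r u v} :=
        card_le_card (filter_subset_filter (fun u => r u v) this)
    _ ≤ #{u ∈ A \ insert v S | r u v} + #{u ∈ S | r u v} := by
        rw [filter_union]; exact card_union_le _ _
    _ ≤ _ := by gcongr; exact filter_subset _ _

lemma enteringSum_le_step (hx0 : 0 ≤ x) (hx1 : x ≤ 1) {v : V} (hv : v ∈ A) (k : ℕ)
    (hd : #A ≤ 2 * #{u ∈ A.erase v | r u v} + 1) :
    enteringSum x r A (k + 1) ≤
      x ^ (#A - 1 - 2 * k) * enteringSum x r (A.erase v) k +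
        enteringSum x r (A.erase v) (k + 1) := by
  unfold enteringSum
  rw [← sum_filter_add_sum_filter_not _ (v ∈ ·)]
  refine add_le_add ?_ ?_
  · have reindex : ∑ S ∈ powersetCard (k + 1) A with v ∈ S, x ^ (2 * numEntering r A S) =
        ∑ S ∈ powersetCard k (A.erase v), x ^ (2 * numEntering r A (insert v S)) := by
      refine sum_nbij' (·.erase v) (insert v) (fun S hS => ?_) (fun S hS => ?_)
        (fun S hS => ?_) (fun S hS => ?_) (fun S hS => ?_) <;>
        simp only [mem_filter, mem_powersetCard] at hS ⊢
      · exact ⟨erase_subset_erase v hS.1.1, by rw [card_erase_of_mem hS.2, hS.1.2]; rfl⟩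
      · have hvS : v ∉ S := fun h => (mem_erase.mp (hS.1 h)).1 rfl
        exact ⟨⟨insert_subset hv (hS.1.trans (erase_subset v A)),
          by rw [card_insert_of_notMem hvS, hS.2]⟩, mem_insert_self v S⟩
      · exact insert_erase hS.2
      · exact erase_insert fun h => (mem_erase.mp (hS.1 h)).1 rfl
      · rw [insert_erase hS.2]
    rw [reindex, mul_sum]
    refine sum_le_sum fun S hS => ?_
    rw [mem_powersetCard] at hS
    have := card_filter_erase_le (r := r) (A := A) v S
    rw [numEntering_insert hS.1, mul_add, pow_add]
    exact mul_le_mul_of_nonneg_right (pow_le_pow_of_le_one hx0 hx1 (by omega))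
      (pow_nonneg hx0 _)
  · have : {S ∈ powersetCard (k + 1) A | v ∉ S} = powersetCard (k + 1) (A.erase v) := by
      ext S; simp only [mem_filter, mem_powersetCard, subset_erase]; tauto
    rw [this]
    exact sum_le_sum fun S _ => pow_le_pow_of_le_one hx0 hx1
      (Nat.mul_le_mul_left 2 (numEntering_mono (erase_subset v A)))

lemma IsTournamentOn.enteringSum_succ_le (hx0 : 0 ≤ x) (hx1 : x < 1)
    (hr : IsTournamentOn r A) {k : ℕ} (hk : 2 * (k + 1) ≤ #A) :
    enteringSum x r A (k + 1) ≤ (1 - x)⁻¹ ^ (k + 1) * (1 - x ^ (#A - 2 * k)) := by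
  induction A using Finset.strongInduction generalizing r k with
  | H A ih =>
    set a := (1 - x)⁻¹
    have ha : a * (1 - x) = 1 := inv_mul_cancel₀ (by linarith)
    have ha0 : 0 ≤ a := inv_nonneg.2 (by linarith)
    obtain ⟨v, hv, hd⟩ := hr.exists_card_le_two_mul_inDegree (card_pos.1 (by omega))
    have hcard : #(A.erase v) = #A - 1 := card_erase_of_mem hv
    have hr' := hr.mono (erase_subset v A)
    have ih_pow : ∀ r', IsTournamentOn r' (A.erase v) → ∀ j, 2 * j ≤ #A - 1 →
        enteringSum x r' (A.erase v) j ≤ a ^ j := by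
      rintro r' hr' (_ | j) hj
      · simp [enteringSum_zero]
      · refine (ih _ (erase_ssubset hv) hr' (by omega)).trans
          (mul_le_of_le_one_right (pow_nonneg ha0 _) ?_)
        linarith [pow_nonneg hx0 (#(A.erase v) - 2 * j)]
    have hstep := enteringSum_le_step hx0 hx1.le hv k hd
    have hxe : 0 ≤ x ^ (#A - 1 - 2 * k) := pow_nonneg hx0 _
    rcases (by omega : 2 * (k + 1) + 1 ≤ #A ∨ 2 * (k + 1) = #A) with hlt | heq
    · have h2 := ih _ (erase_ssubset hv) hr' (k := k) (by omega)
      rw [hcard] at h2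
      calc _ ≤ x ^ (#A - 1 - 2 * k) * a ^ k + a ^ (k + 1) * (1 - x ^ (#A - 1 - 2 * k)) :=
            hstep.trans (add_le_add (mul_le_mul_of_nonneg_left (ih_pow r hr' k (by omega)) hxe) h2)
        _ = a ^ (k + 1) * (1 - x ^ (#A - 2 * k)) := by
            rw [show #A - 2 * k = (#A - 1 - 2 * k) + 1 by omega]
            linear_combination (-(x ^ (#A - 1 - 2 * k) * a ^ k)) * ha
    -- `#A = 2k + 2`: the `(k + 1)`-subsets of `A.erase v` are complements of `k`-subsets
    · have h2 : enteringSum x r (A.erase v) (k + 1) ≤ a ^ k := by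
        rw [enteringSum_swap (by omega), hcard, show #A - 1 - (k + 1) = k by omega]
        exact ih_pow _ hr'.swap k (by omega)
      rw [show #A - 1 - 2 * k = 1 by omega] at hstep hxe
      calc _ ≤ x ^ 1 * a ^ k + a ^ k :=
            hstep.trans (add_le_add (mul_le_mul_of_nonneg_left (ih_pow r hr' k (by omega)) hxe) h2)
        _ = a ^ (k + 1) * (1 - x ^ (#A - 2 * k)) := by
            rw [show #A - 2 * k = 2 by omega]
            linear_combination (-(a ^ k * (1 + x))) * ha

lemma IsTournamentOn.enteringSum_le_pow (hx0 : 0 ≤ x) (hx1 : x < 1)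
    (hr : IsTournamentOn r A) {k : ℕ} (hk : 2 * k ≤ #A) :
    enteringSum x r A k ≤ (1 - x)⁻¹ ^ k := by
  rcases k with _ | k
  · simp [enteringSum_zero]
  · refine (hr.enteringSum_succ_le hx0 hx1 hk).trans (mul_le_of_le_one_right ?_ ?_)
    · exact pow_nonneg (inv_nonneg.2 (by linarith)) _
    · linarith [pow_nonneg hx0 (#A - 2 * k)]

theorem IsTournamentOn.enteringSum_le (hx0 : 0 ≤ x) (hx1 : x < 1)
    (hr : IsTournamentOn r A) (k : ℕ) :
    enteringSum x r A k ≤ (1 - x)⁻¹ ^ min k (#A - k) := by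
  rcases le_total (2 * k) #A with h | h
  · rw [min_eq_left (by omega)]
    exact hr.enteringSum_le_pow hx0 hx1 h
  rcases le_or_gt k #A with h' | h'
  · rw [min_eq_right (by omega), enteringSum_swap h']
    exact hr.swap.enteringSum_le_pow hx0 hx1 (by omega)
  · rw [enteringSum, powersetCard_eq_empty.2 h', sum_empty]
    exact pow_nonneg (inv_nonneg.2 (by linarith)) _

end Tournament

section RandomTournament

variable {n : ℕ}

lemma beats_or_beats (σ : Orient n) {i j : Fin n} (h : i ≠ j) : beats σ i j ∨ beats σ j i := by
  rcases h.lt_or_gt with h | h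
  · cases hσ : σ ⟨(i, j), h⟩
    · exact Or.inr (Or.inr ⟨h, hσ⟩)
    · exact Or.inl (Or.inl ⟨h, hσ⟩)
  · cases hσ : σ ⟨(j, i), h⟩
    · exact Or.inl (Or.inr ⟨h, hσ⟩)
    · exact Or.inr (Or.inl ⟨h, hσ⟩)

def Dominates (σ : Orient n) (S : Finset (Fin n)) : Prop :=
  ∀ u ∈ S, ∀ w ∉ S, beats σ u w

lemma exists_dominates_of_not_stronglyConnected (σ : Orient n)
    (h : ¬ ∀ i j, Relation.ReflTransGen (beats σ) i j) :
    ∃ S : Finset (Fin n), S.Nonempty ∧ S ≠ univ ∧ Dominates σ S := by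
  classical
  simp only [not_forall] at h
  obtain ⟨i, j, hij⟩ := h
  refine ⟨({u | ¬ Relation.ReflTransGen (beats σ) i u} : Finset (Fin n)), ⟨j, by simpa using hij⟩,
    fun h => ?_, fun u hu w hw => ?_⟩
  · have hi := eq_univ_iff_forall.1 h i
    simp only [mem_filter, mem_univ, true_and] at hi
    exact hi .refl
  · simp only [mem_filter, mem_univ, true_and, not_not] at hu hw
    rcases beats_or_beats σ (show u ≠ w by rintro rfl; exact hu hw) with h | h
    · exact h
    · exact absurd (hw.tail h) hu

def edgeProb (p : Fin n → Fin n → ℝ) (e : Edges n) (b : Bool) : ℝ :=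
  if b = true then p e.1.1 e.1.2 else 1 - p e.1.1 e.1.2

lemma prOf_eq_prod_edgeProb (p : Fin n → Fin n → ℝ) (σ : Orient n) :
    prOf p σ = ∏ e, edgeProb p e (σ e) := rfl

lemma sum_prod_orient {M : Type*} [CommSemiring M] (g : Edges n → Bool → M) :
    ∑ σ : Orient n, ∏ e, g e (σ e) = ∏ e, (g e true + g e false) := by
  rw [← Fintype.prod_sum]
  simp only [Fintype.sum_bool]

lemma sum_prOf (p : Fin n → Fin n → ℝ) : ∑ σ, prOf p σ = 1 :=
  (sum_prod_orient (edgeProb p)).trans (by simp [edgeProb])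

lemma prOf_nonneg {p : Fin n → Fin n → ℝ} (hp : ∀ i j, i < j → p i j ∈ Set.Icc 0 1)
    (σ : Orient n) : 0 ≤ prOf p σ :=
  prod_nonneg fun e _ => by
    have := hp _ _ e.2
    split_ifs <;> simp only [Set.mem_Icc] at this <;> linarith

lemma Pr_compl (p : Fin n → Fin n → ℝ) (E : Set (Orient n)) : Pr p Eᶜ = 1 - Pr p E := by
  rw [← sum_prOf p, Pr, Pr, eq_sub_iff_add_eq, ← sum_add_distrib]
  exact sum_congr rfl fun σ _ => by rw [add_comm, Set.indicator_self_add_compl_apply]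

lemma Pr_nonneg {p : Fin n → Fin n → ℝ} (hp : ∀ i j, i < j → p i j ∈ Set.Icc 0 1)
    (E : Set (Orient n)) : 0 ≤ Pr p E :=
  sum_nonneg fun σ _ => Set.indicator_nonneg (fun σ _ => prOf_nonneg hp σ) σ

lemma Pr_mono {p : Fin n → Fin n → ℝ} (hp : ∀ i j, i < j → p i j ∈ Set.Icc 0 1)
    {E F : Set (Orient n)} (h : E ⊆ F) : Pr p E ≤ Pr p F :=
  sum_le_sum fun σ _ => Set.indicator_le_indicator_of_subset h (prOf_nonneg hp) σ

lemma Pr_biUnion_le {ι : Type*} {p : Fin n → Fin n → ℝ}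
    (hp : ∀ i j, i < j → p i j ∈ Set.Icc 0 1) (s : Finset ι) (F : ι → Set (Orient n)) :
    Pr p (⋃ i ∈ s, F i) ≤ ∑ i ∈ s, Pr p (F i) := by
  simp only [Pr]
  rw [sum_comm]
  refine sum_le_sum fun σ _ => ?_
  by_cases h : σ ∈ ⋃ i ∈ s, F i
  · obtain ⟨i, hi, hσ⟩ := Set.mem_iUnion₂.1 h
    rw [Set.indicator_of_mem h, ← Set.indicator_of_mem hσ (prOf p)]
    exact single_le_sum (fun j _ => Set.indicator_nonneg (fun σ _ => prOf_nonneg hp σ) σ) hi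
  · rw [Set.indicator_of_notMem h]
    exact sum_nonneg fun j _ => Set.indicator_nonneg (fun σ _ => prOf_nonneg hp σ) σ

def Enters (S : Finset (Fin n)) (e : Edges n) (b : Bool) : Prop :=
  (e.1.1 ∉ S ∧ e.1.2 ∈ S ∧ b = true) ∨ (e.1.2 ∉ S ∧ e.1.1 ∈ S ∧ b = false)

lemma dominates_iff (σ : Orient n) (S : Finset (Fin n)) :
    Dominates σ S ↔ ∀ e, ¬ Enters S e (σ e) := by
  refine ⟨fun h e he => ?_, fun h u hu w hw => ?_⟩
  · rcases he with ⟨hi, hj, hb⟩ | ⟨hj, hi, hb⟩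
    · rcases h _ hj _ hi with ⟨h', -⟩ | ⟨_, h'⟩
      · exact lt_asymm e.2 h'
      · exact absurd (hb.symm.trans h') (by decide)
    · rcases h _ hi _ hj with ⟨_, h'⟩ | ⟨h', -⟩
      · exact absurd (hb.symm.trans h') (by decide)
      · exact lt_asymm e.2 h'
  · rcases (show u ≠ w by rintro rfl; exact hw hu).lt_or_gt with hlt | hgt
    · cases hσ : σ ⟨(u, w), hlt⟩
      · exact (h ⟨(u, w), hlt⟩ (Or.inr ⟨hw, hu, hσ⟩)).elim
      · exact Or.inl ⟨hlt, hσ⟩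
    · cases hσ : σ ⟨(w, u), hgt⟩
      · exact Or.inr ⟨hgt, hσ⟩
      · exact (h ⟨(w, u), hgt⟩ (Or.inl ⟨hw, hu, hσ⟩)).elim

def winProb (p : Fin n → Fin n → ℝ) (i j : Fin n) : ℝ :=
  if i < j then p i j else 1 - p j i

lemma prod_edges_mul_swap {M : Type*} [CommMonoid M] (g : Fin n × Fin n → M)
    (hg : ∀ i, g (i, i) = 1) : ∏ e : Edges n, g e.1 * g e.1.swap = ∏ x, g x := by
  have split : ∀ x : Fin n × Fin n,
      g x = (if x.1 < x.2 then g x else 1) * (if x.2 < x.1 then g x else 1) := by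
    rintro ⟨i, j⟩
    rcases lt_trichotomy i j with h | rfl | h
    · simp [h, h.not_gt]
    · simp [hg]
    · simp [h, h.not_gt]
  have swap : ∏ x : Fin n × Fin n, (if x.2 < x.1 then g x else 1) =
      ∏ x : Fin n × Fin n, (if x.1 < x.2 then g x.swap else 1) :=
    (Fintype.prod_equiv (Equiv.prodComm _ _) _ _ fun _ => rfl).symm
  symm
  calc ∏ x, g x = ∏ x : Fin n × Fin n, (if x.1 < x.2 then g x else 1) *
        (if x.2 < x.1 then g x else 1) := Fintype.prod_congr _ _ split
    _ = ∏ x : Fin n × Fin n, (if x.1 < x.2 then g x * g x.swap else 1) := by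
        rw [prod_mul_distrib, swap, ← prod_mul_distrib]
        exact Fintype.prod_congr _ _ fun x => by split_ifs <;> simp
    _ = ∏ e : Edges n, g e.1 * g e.1.swap := by
        rw [← prod_filter, prod_subtype (p := fun x : Fin n × Fin n => x.1 < x.2) _ (by simp)]

lemma Pr_dominates (p : Fin n → Fin n → ℝ) (S : Finset (Fin n)) :
    Pr p {σ | Dominates σ S} = ∏ u ∈ S, ∏ w ∈ univ \ S, winProb p u w := by
  classical
  set H : Fin n × Fin n → ℝ := fun x => if x.1 ∈ S ∧ x.2 ∉ S then winProb p x.1 x.2 else 1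
  have indicator_eq : ∀ σ, {σ | Dominates σ S}.indicator (prOf p) σ =
      ∏ e, if ¬ Enters S e (σ e) then edgeProb p e (σ e) else 0 := by
    intro σ
    by_cases h : Dominates σ S
    · rw [Set.indicator_of_mem h, prOf_eq_prod_edgeProb]
      exact prod_congr rfl fun e _ => (if_pos ((dominates_iff σ S).1 h e)).symm
    · obtain ⟨e, he⟩ : ∃ e, Enters S e (σ e) := by simpa [dominates_iff] using h
      rw [Set.indicator_of_notMem h]
      exact (prod_eq_zero (mem_univ e) (if_neg (not_not.2 he))).symm
  have edge_eq : ∀ e : Edges n, (if ¬ Enters S e true then edgeProb p e true else 0) +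
      (if ¬ Enters S e false then edgeProb p e false else 0) = H e.1 * H e.1.swap := by
    intro e
    by_cases h1 : e.1.1 ∈ S <;> by_cases h2 : e.1.2 ∈ S <;>
      simp [H, Enters, edgeProb, winProb, h1, h2, e.2, e.2.not_gt]
  have cut : univ.filter (fun x : Fin n × Fin n => x.1 ∈ S ∧ x.2 ∉ S) = S ×ˢ (univ \ S) := by
    ext x; simp
  simp only [Pr, indicator_eq]
  rw [sum_prod_orient (fun e b => if ¬ Enters S e b then edgeProb p e b else 0),
    Fintype.prod_congr _ _ edge_eq, prod_edges_mul_swap H (by simp [H]),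
    ← prod_product (f := fun x => winProb p x.1 x.2), ← cut, prod_filter]

noncomputable def majority (p : Fin n → Fin n → ℝ) (u w : Fin n) : Bool :=
  if u < w then decide (1 / 2 ≤ p u w) else decide (p w u < 1 / 2)

lemma isTournamentOn_majority (p : Fin n → Fin n → ℝ) : IsTournamentOn (majority p) univ := by
  intro u _ w _ huw
  rcases huw.lt_or_gt with h | h <;>
    simp only [majority, h, h.not_gt, if_true, if_false, ← decide_not, not_lt, not_le]

lemma winProb_le_half (p : Fin n → Fin n → ℝ) {u w : Fin n} (huw : u ≠ w)
    (h : majority p w u = true) : winProb p u w ≤ 1 / 2 := by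
  rcases huw.lt_or_gt with h' | h' <;> simp [majority, winProb, h', h'.not_gt] at h ⊢ <;> linarith

lemma winProb_mem_Icc {p : Fin n → Fin n → ℝ} {φ : ℝ}
    (hp : ∀ i j, i ≠ j → p i j ∈ Set.Icc φ (1 - φ)) {u w : Fin n} (huw : u ≠ w) :
    winProb p u w ∈ Set.Icc φ (1 - φ) := by
  unfold winProb
  split_ifs
  · exact hp u w huw
  · obtain ⟨h1, h2⟩ := hp w u huw.symm
    constructor <;> linarith

lemma Pr_dominates_le {p : Fin n → Fin n → ℝ} {φ : ℝ} (hφ0 : 0 ≤ φ) (hφ : φ ≤ 1 / 8)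
    (hp : ∀ i j, i ≠ j → p i j ∈ Set.Icc φ (1 - φ)) (S : Finset (Fin n)) :
    Pr p {σ | Dominates σ S} ≤
      (1 - φ) ^ (#S * (n - #S)) * (7 / 8 : ℝ) ^ (2 * numEntering (majority p) univ S) := by
  have hne : ∀ u ∈ S, ∀ w ∈ univ \ S, u ≠ w := by
    rintro u hu w hw rfl; exact (mem_sdiff.1 hw).2 hu
  have factor : ∀ u ∈ S, ∀ w ∈ univ \ S,
      winProb p u w ≤ (1 - φ) * (if majority p w u then (7 / 8 : ℝ) ^ 2 else 1) := by
    intro u hu w hw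
    split_ifs with h
    · nlinarith [winProb_le_half p (hne u hu w hw) h]
    · linarith [(winProb_mem_Icc hp (hne u hu w hw)).2]
  have nonneg : ∀ u ∈ S, ∀ w ∈ univ \ S, 0 ≤ winProb p u w := fun u hu w hw =>
    hφ0.trans (winProb_mem_Icc hp (hne u hu w hw)).1
  calc Pr p {σ | Dominates σ S} = ∏ u ∈ S, ∏ w ∈ univ \ S, winProb p u w := Pr_dominates p S
    _ ≤ ∏ u ∈ S, ∏ w ∈ univ \ S, (1 - φ) * (if majority p w u then (7 / 8 : ℝ) ^ 2 else 1) :=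
        prod_le_prod (fun u hu => prod_nonneg (nonneg u hu))
          fun u hu => prod_le_prod (nonneg u hu) (factor u hu)
    _ = _ := by
        simp only [prod_mul_distrib, prod_const, ← prod_filter, prod_pow_eq_pow_sum,
          card_univ_sdiff, Fintype.card_fin, ← pow_mul, numEntering]
        rw [← mul_sum, mul_comm (n - #S)]

lemma sum_Pr_dominates_le {p : Fin n → Fin n → ℝ} {φ : ℝ} (hφ0 : 0 ≤ φ) (hφ : φ ≤ 1 / 8)
    (hp : ∀ i j, i ≠ j → p i j ∈ Set.Icc φ (1 - φ)) (k : ℕ) :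
    ∑ S ∈ powersetCard k univ, Pr p {σ | Dominates σ S} ≤
      (8 * (1 - φ) ^ (n / 2)) ^ min k (n - k) := by
  have hexp : n / 2 * min k (n - k) ≤ k * (n - k) := by
    rcases le_total k (n - k) with h | h
    · rw [min_eq_left h, mul_comm]; exact Nat.mul_le_mul_left k (by omega)
    · rw [min_eq_right h]; exact Nat.mul_le_mul_right (n - k) (by omega)
  calc ∑ S ∈ powersetCard k univ, Pr p {σ | Dominates σ S}
      ≤ ∑ S ∈ powersetCard k univ,
          (1 - φ) ^ (k * (n - k)) * (7 / 8 : ℝ) ^ (2 * numEntering (majority p) univ S) :=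
        sum_le_sum fun S hS => by
          rw [← (mem_powersetCard.1 hS).2]; exact Pr_dominates_le hφ0 hφ hp S
    _ = (1 - φ) ^ (k * (n - k)) * enteringSum (7 / 8) (majority p) univ k := by
        rw [enteringSum, mul_sum]
    _ ≤ ((1 - φ) ^ (n / 2)) ^ min k (n - k) * 8 ^ min k (n - k) := by
        have hφ1 : (1 - φ) ^ (k * (n - k)) ≤ ((1 - φ) ^ (n / 2)) ^ min k (n - k) := by
          rw [← pow_mul]; exact pow_le_pow_of_le_one (by linarith) (by linarith) hexp
        refine mul_le_mul hφ1 ?_ (sum_nonneg fun _ _ => by positivity)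
          (pow_nonneg (pow_nonneg (by linarith) _) _)
        have := (isTournamentOn_majority p).enteringSum_le (x := 7 / 8) (by norm_num)
          (by norm_num) k
        norm_num [card_univ, Fintype.card_fin] at this ⊢
        exact this
    _ = _ := by rw [mul_pow, mul_comm]

lemma Pr_not_stronglyConnected_le_sum {p : Fin n → Fin n → ℝ}
    (hp : ∀ i j, i < j → p i j ∈ Set.Icc 0 1) :
    Pr p {σ | ¬ ∀ i j, Relation.ReflTransGen (beats σ) i j} ≤
      ∑ k ∈ Ico 1 n, ∑ S ∈ powersetCard k univ, Pr p {σ | Dominates σ S} := by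
  have cover : {σ : Orient n | ¬ ∀ i j, Relation.ReflTransGen (beats σ) i j} ⊆
      ⋃ k ∈ Ico 1 n, ⋃ S ∈ powersetCard k univ, {σ | Dominates σ S} := by
    intro σ hσ
    obtain ⟨S, hne, huniv, hdom⟩ := exists_dominates_of_not_stronglyConnected σ hσ
    have hlt : #S < n := by simpa using card_lt_card (ssubset_univ_iff.2 huniv)
    simp only [Set.mem_iUnion, mem_Ico, mem_powersetCard]
    exact ⟨#S, ⟨hne.card_pos, hlt⟩, S, ⟨subset_univ S, rfl⟩, hdom⟩
  exact (Pr_mono hp cover).trans <| (Pr_biUnion_le hp _ _).trans <|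
    sum_le_sum fun k _ => Pr_biUnion_le hp _ _

lemma sum_Ico_pow_min_le {ρ : ℝ} (h0 : 0 ≤ ρ) (h1 : ρ < 1) (n : ℕ) :
    ∑ k ∈ Ico 1 n, ρ ^ min k (n - k) ≤ 2 * ρ / (1 - ρ) := by
  have reflect : ∑ k ∈ Ico 1 n, ρ ^ (n - k) = ∑ k ∈ Ico 1 n, ρ ^ k := by
    rw [sum_Ico_reflect _ _ (Nat.le_succ n)]
    simp
  have geom := geom_sum_Ico_le_of_lt_one (m := 1) (n := n) h0 h1
  calc ∑ k ∈ Ico 1 n, ρ ^ min k (n - k) ≤ ∑ k ∈ Ico 1 n, (ρ ^ k + ρ ^ (n - k)) :=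
        sum_le_sum fun k _ => by
          rcases min_cases k (n - k) with ⟨h, -⟩ | ⟨h, -⟩ <;> rw [h] <;>
            linarith [pow_nonneg h0 k, pow_nonneg h0 (n - k)]
    _ ≤ 2 * ρ / (1 - ρ) := by
        rw [sum_add_distrib, reflect]
        linarith [show 2 * ρ / (1 - ρ) = 2 * (ρ ^ 1 / (1 - ρ)) by ring]

lemma mem_Icc_zero_one_of_mem_Icc {p : Fin n → Fin n → ℝ} {φ : ℝ} (hφ0 : 0 ≤ φ)
    (hp : ∀ i j, i ≠ j → p i j ∈ Set.Icc φ (1 - φ)) (i j : Fin n) (h : i < j) :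
    p i j ∈ Set.Icc 0 1 := by
  obtain ⟨h1, h2⟩ := hp i j h.ne
  constructor <;> linarith

theorem Pr_not_stronglyConnected_le {p : Fin n → Fin n → ℝ} {φ : ℝ} (hφ0 : 0 ≤ φ) (hφ : φ ≤ 1 / 8)
    (hp : ∀ i j, i ≠ j → p i j ∈ Set.Icc φ (1 - φ)) (hρ : 8 * (1 - φ) ^ (n / 2) < 1) :
    Pr p {σ | ¬ ∀ i j, Relation.ReflTransGen (beats σ) i j} ≤
      2 * (8 * (1 - φ) ^ (n / 2)) / (1 - 8 * (1 - φ) ^ (n / 2)) := by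
  calc _ ≤ _ := Pr_not_stronglyConnected_le_sum (mem_Icc_zero_one_of_mem_Icc hφ0 hp)
    _ ≤ ∑ k ∈ Ico 1 n, (8 * (1 - φ) ^ (n / 2)) ^ min k (n - k) :=
        sum_le_sum fun k _ => sum_Pr_dominates_le hφ0 hφ hp k
    _ ≤ _ := sum_Ico_pow_min_le (mul_nonneg (by norm_num) (pow_nonneg (by linarith) _)) hρ n

end RandomTournament

open Filter Topology

lemma tendsto_one_sub_pow_half {φ : ℕ → ℝ} (h0 : ∀ᶠ n in atTop, 0 ≤ φ n) (h1 : ∀ n, φ n ≤ 1)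
    (h : Tendsto (fun n : ℕ => n * φ n) atTop atTop) :
    Tendsto (fun n : ℕ => (1 - φ n) ^ (n / 2)) atTop (𝓝 0) := by
  have lower : Tendsto (fun n : ℕ => n * φ n / 2 + -(1 / 2)) atTop atTop :=
    tendsto_atTop_add_const_right _ _ (h.atTop_div_const two_pos)
  have exponent : Tendsto (fun n : ℕ => φ n * (n / 2 : ℕ)) atTop atTop := by
    refine tendsto_atTop_mono' _ ?_ lower
    filter_upwards [h0] with n hn
    have : (n : ℝ) ≤ 2 * (n / 2 : ℕ) + 1 := by exact_mod_cast (by omega : n ≤ 2 * (n / 2) + 1)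
    nlinarith [mul_le_mul_of_nonneg_left this hn, h1 n]
  refine squeeze_zero (fun n => pow_nonneg (by linarith [h1 n]) _) (fun n => ?_)
    (Real.tendsto_exp_neg_atTop_nhds_zero.comp exponent)
  calc (1 - φ n) ^ (n / 2) ≤ Real.exp (-φ n) ^ (n / 2) :=
        pow_le_pow_left₀ (by linarith [h1 n]) (Real.one_sub_le_exp_neg _) _
    _ = Real.exp (-(φ n * (n / 2 : ℕ))) := by rw [← Real.exp_nat_mul]; ring_nf

theorem tendsto_Pr_not_stronglyConnected {φ : ℕ → ℝ} (hφ0 : ∀ᶠ n in atTop, 0 ≤ φ n)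
    (hφ : ∀ n, φ n ≤ 1 / 8) (hφω : Tendsto (fun n : ℕ => n * φ n) atTop atTop)
    (p : ∀ n : ℕ, Fin n → Fin n → ℝ)
    (hp : ∀ n, ∀ i j : Fin n, i ≠ j → p n i j ∈ Set.Icc (φ n) (1 - φ n)) :
    Tendsto (fun n => Pr (p n) {σ | ¬ ∀ i j, Relation.ReflTransGen (beats σ) i j}) atTop (𝓝 0) := by
  set ρ : ℕ → ℝ := fun n => 8 * (1 - φ n) ^ (n / 2)
  have hρ : Tendsto ρ atTop (𝓝 0) := by
    simpa using (tendsto_one_sub_pow_half hφ0 (fun n => (hφ n).trans (by norm_num)) hφω).const_mul 8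
  have hlim : Tendsto (fun n => 2 * ρ n / (1 - ρ n)) atTop (𝓝 0) := by
    rw [show (0 : ℝ) = 2 * 0 / (1 - 0) by norm_num]
    exact (hρ.const_mul 2).div (tendsto_const_nhds.sub hρ) (by norm_num)
  refine squeeze_zero' ?_ ?_ hlim
  · filter_upwards [hφ0] with n hn
    exact Pr_nonneg (mem_Icc_zero_one_of_mem_Icc hn (hp n)) _
  · filter_upwards [hφ0, hρ.eventually_lt_const one_pos] with n h0 h1
    exact Pr_not_stronglyConnected_le h0 (hφ n) (hp n) h1

theorem stmt8_general (f : ℕ → ℝ)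
    (hfω : Filter.Tendsto (fun n : ℕ => (n : ℝ) * f n) Filter.atTop Filter.atTop)
    (p : ∀ n : ℕ, Fin n → Fin n → ℝ)
    (hp : ∀ n : ℕ, ∀ i j : Fin n, i ≠ j → p n i j ∈ Set.Icc (f n) (1 - f n)) :
    Filter.Tendsto
      (fun n : ℕ => Pr (p n) {σ : Orient n | ∀ i j : Fin n, Relation.ReflTransGen (beats σ) i j})
      Filter.atTop (nhds 1) := by
  set φ : ℕ → ℝ := fun n => min (f n) (1 / 8)
  have hφ0 : ∀ᶠ n in atTop, 0 ≤ φ n := by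
    filter_upwards [hfω.eventually_gt_atTop 0] with n hn
    exact le_min (pos_of_mul_pos_right hn n.cast_nonneg).le (by norm_num)
  have hφω : Tendsto (fun n : ℕ => n * φ n) atTop atTop := by
    refine tendsto_atTop.2 fun b => ?_
    filter_upwards [tendsto_atTop.1 hfω b, tendsto_atTop.1 tendsto_natCast_atTop_atTop (8 * b)]
      with n h1 h2
    rw [mul_min_of_nonneg _ _ n.cast_nonneg]
    exact le_min h1 (by linarith)
  have hpφ : ∀ n, ∀ i j : Fin n, i ≠ j → p n i j ∈ Set.Icc (φ n) (1 - φ n) := fun n i j h =>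
    ⟨(min_le_left _ _).trans (hp n i j h).1,
      (hp n i j h).2.trans (by linarith [min_le_left (f n) (1 / 8)])⟩
  have hbad := tendsto_Pr_not_stronglyConnected hφ0 (fun n => min_le_right _ _) hφω p hpφ
  have hgood := (tendsto_const_nhds (x := (1 : ℝ))).sub hbad
  rw [sub_zero] at hgood
  refine hgood.congr fun n => ?_
  rw [← Set.compl_ofPred, Pr_compl, sub_sub_cancel]

/-- if every edge probability lies in `[f(n), 1 - f(n)]` with `f(n) ≤ 1/2` and
`f(n) ∈ ω(1/n)` (i.e. `n · f(n) → ∞`), then the probability that the random tournament is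
strongly connected (equivalently `TC(T) = A`) tends to `1`. -/
theorem stmt8 (f : ℕ → ℝ) (hf0 : ∀ n, 0 ≤ f n) (hf2 : ∀ n, f n ≤ 1 / 2)
    (hfω : Filter.Tendsto (fun n : ℕ => (n : ℝ) * f n) Filter.atTop Filter.atTop)
    (p : ∀ n : ℕ, Fin n → Fin n → ℝ)
    (hp : ∀ n : ℕ, ∀ i j : Fin n, i ≠ j → p n i j ∈ Set.Icc (f n) (1 - f n)) :
    Filter.Tendsto
      (fun n : ℕ => Pr (p n) {σ : Orient n | ∀ i j : Fin n, Relation.ReflTransGen (beats σ) i j})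
      Filter.atTop (nhds 1) :=
  stmt8_general f hfω p hp
end

section
/- Suppose a random tournament on n alternatives a_1,...,a_n is generated with independent edges where, for all i > j, the probability of the edge a_i → a_j is exactly c/n for a constant c ≥ 0 (and hence a_i → a_j for i < j with probability 1 − c/n). Then the probability that the tournament has a Condorcet winner equals (1 − c/n)^{n−1} · Σ_{i=0}^{n−1} (c/(n−c))^i, and this converges to e^{−c} as n → ∞. -/
open Finset Filter Topology

section Model

variable {n : ℕ}

lemma beats_asymm {σ : Orient n} {i j : Fin n} (h : beats σ i j) : ¬ beats σ j i := by
  unfold beats at *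
  grind

def IsCondorcetWinner (σ : Orient n) (i : Fin n) : Prop :=
  ∀ j, j ≠ i → beats σ i j

lemma IsCondorcetWinner.unique {σ : Orient n} {i j : Fin n} (hi : IsCondorcetWinner σ i)
    (hj : IsCondorcetWinner σ j) : i = j := by
  by_contra hij
  exact beats_asymm (hi j (Ne.symm hij)) (hj i hij)

def incidentEdges (i : Fin n) : Finset (Edges n) :=
  univ.filter fun e => e.1.1 = i ∨ e.1.2 = i

lemma isCondorcetWinner_iff (σ : Orient n) (i : Fin n) :
    IsCondorcetWinner σ i ↔ ∀ e ∈ incidentEdges i, σ e = decide (e.1.1 = i) := by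
  constructor
  · rintro h ⟨⟨a, b⟩, hab⟩ he
    simp only [incidentEdges, mem_filter, mem_univ, true_and] at he
    rcases he with rfl | rfl
    · rcases h b hab.ne' with ⟨_, hσ⟩ | ⟨hba, -⟩
      · simpa using hσ
      · exact absurd hab (lt_asymm hba)
    · rcases h a hab.ne with ⟨hba, -⟩ | ⟨_, hσ⟩
      · exact absurd hab (lt_asymm hba)
      · simpa [hab.ne] using hσ
  · intro h j hj
    rcases lt_or_gt_of_ne hj.symm with hij | hji
    · exact Or.inl ⟨hij, by simpa using h ⟨(i, j), hij⟩ (by simp [incidentEdges])⟩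
    · exact Or.inr ⟨hji, by simpa [hji.ne] using h ⟨(j, i), hji⟩ (by simp [incidentEdges])⟩

lemma Pr_iUnion {ι : Type*} [Fintype ι] (p : Fin n → Fin n → ℝ) (A : ι → Set (Orient n))
    (hA : Pairwise (Function.onFun Disjoint A)) :
    Pr p (⋃ i, A i) = ∑ i, Pr p (A i) := by
  have h := fun σ => indicator_biUnion_apply univ A (f := prOf p) (fun i _ j _ hij => hA hij) σ
  simp only [mem_univ, Set.iUnion_true] at h
  simp only [Pr, h]
  exact sum_comm

lemma Pr_cylinder (p : Fin n → Fin n → ℝ) (S : Finset (Edges n)) (τ : Orient n) :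
    Pr p {σ | ∀ e ∈ S, σ e = τ e} =
      ∏ e ∈ S, if τ e = true then p e.1.1 e.1.2 else 1 - p e.1.1 e.1.2 := by
  classical
  set w : Edges n → Bool → ℝ := fun e b => if b then p e.1.1 e.1.2 else 1 - p e.1.1 e.1.2
  have hind : ∀ σ : Orient n, Set.indicator {σ | ∀ e ∈ S, σ e = τ e} (prOf p) σ =
      ∏ e, if e ∈ S → σ e = τ e then w e (σ e) else 0 := by
    intro σ
    rw [prod_ite_zero]
    simp [Set.indicator_apply, prOf, w]
  -- a constrained edge contributes its forced weight, a free one `p + (1 - p) = 1`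
  have hfib : ∀ e, ∑ b, (if e ∈ S → b = τ e then w e b else 0) =
      if e ∈ S then w e (τ e) else 1 := by
    intro e
    by_cases he : e ∈ S <;> cases τ e <;> simp [he, w]
  simp only [Pr, hind]
  rw [← Fintype.prod_sum (fun e b => if e ∈ S → b = τ e then w e b else 0)]
  simp only [hfib, Fintype.prod_ite_mem, w]

lemma prod_edges_fst_eq {M : Type*} [CommMonoid M] (f : Fin n → Fin n → M) (i : Fin n) :
    ∏ e ∈ univ.filter (fun e : Edges n => e.1.1 = i), f e.1.1 e.1.2 =
      ∏ j ∈ Ioi i, f i j :=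
  prod_bij' (fun e _ => e.1.2) (fun j hj => ⟨(i, j), mem_Ioi.mp hj⟩)
    (fun e he => by simpa [(mem_filter.mp he).2] using e.2) (by simp)
    (fun e he => by ext <;> simp [(mem_filter.mp he).2]) (by simp)
    (fun e he => by simp [(mem_filter.mp he).2])

lemma prod_edges_snd_eq {M : Type*} [CommMonoid M] (f : Fin n → Fin n → M) (i : Fin n) :
    ∏ e ∈ univ.filter (fun e : Edges n => e.1.2 = i), f e.1.1 e.1.2 =
      ∏ j ∈ Iio i, f j i :=
  prod_bij' (fun e _ => e.1.1) (fun j hj => ⟨(j, i), mem_Iio.mp hj⟩)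
    (fun e he => by simpa [(mem_filter.mp he).2] using e.2) (by simp)
    (fun e he => by ext <;> simp [(mem_filter.mp he).2]) (by simp)
    (fun e he => by simp [(mem_filter.mp he).2])

lemma Pr_isCondorcetWinner (p : Fin n → Fin n → ℝ) (i : Fin n) :
    Pr p {σ | IsCondorcetWinner σ i} = (∏ j ∈ Ioi i, p i j) * ∏ j ∈ Iio i, (1 - p j i) := by
  have hwin : {σ | IsCondorcetWinner σ i} =
      {σ | ∀ e ∈ incidentEdges i, σ e = decide (e.1.1 = i)} :=
    Set.ext fun σ => isCondorcetWinner_iff σ i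
  rw [hwin, Pr_cylinder, prod_ite, incidentEdges, filter_filter, filter_filter,
    ← prod_edges_fst_eq, ← prod_edges_snd_eq (fun a b => 1 - p a b)]
  have hne : ∀ e : Edges n, e.1.2 = i → e.1.1 ≠ i := fun e h h' => e.2.ne (h'.trans h.symm)
  congr 2 <;> ext e
  · simp +contextual
  · simpa using ⟨fun h => h.1.resolve_left h.2, fun h => ⟨Or.inr h, hne e h⟩⟩

lemma Pr_exists_isCondorcetWinner (p : Fin n → Fin n → ℝ) :
    Pr p {σ | ∃ i, IsCondorcetWinner σ i} =
      ∑ i, (∏ j ∈ Ioi i, p i j) * ∏ j ∈ Iio i, (1 - p j i) := by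
  have hdisj :
      Pairwise (Function.onFun Disjoint fun i => {σ : Orient n | IsCondorcetWinner σ i}) :=
    fun i j hij => Set.disjoint_left.2 fun _ hi hj => hij (IsCondorcetWinner.unique hi hj)
  rw [Set.ofPred_exists, Pr_iUnion p _ hdisj]
  simp only [Pr_isCondorcetWinner]

lemma Pr_exists_isCondorcetWinner_const (q : ℝ) :
    Pr (fun _ _ : Fin n => q) {σ | ∃ i, IsCondorcetWinner σ i} =
      ∑ k ∈ range n, q ^ (n - 1 - k) * (1 - q) ^ k := by
  simp only [Pr_exists_isCondorcetWinner, prod_const, Fin.card_Ioi, Fin.card_Iio]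
  exact Fin.sum_univ_eq_sum_range (fun k => q ^ (n - 1 - k) * (1 - q) ^ k) n

end Model

lemma sum_range_pow_mul_pow_eq_mul_geom_sum {K : Type*} [Field K] {a : K} (ha : a ≠ 0) (b : K)
    (n : ℕ) :
    ∑ k ∈ range n, a ^ (n - 1 - k) * b ^ k = a ^ (n - 1) * ∑ k ∈ range n, (b / a) ^ k := by
  rw [mul_sum]
  refine sum_congr rfl fun k hk => ?_
  rw [div_pow, ← pow_sub_mul_pow a (show k ≤ n - 1 by grind)]
  field_simp

lemma tendsto_one_add_div_pow_pred_exp (x : ℝ) :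
    Tendsto (fun n : ℕ => (1 + x / n) ^ (n - 1)) atTop (𝓝 (Real.exp x)) := by
  have hbase : Tendsto (fun n : ℕ => 1 + x / n) atTop (𝓝 1) := by
    simpa using tendsto_const_nhds.add (tendsto_const_div_atTop_nhds_zero_nat x)
  have hquot := (Real.tendsto_one_add_div_pow_exp x).div hbase one_ne_zero
  rw [div_one] at hquot
  refine hquot.congr' ?_
  filter_upwards [hbase.eventually_ne one_ne_zero, eventually_ge_atTop 1] with n hne hn
  obtain ⟨m, rfl⟩ := Nat.exists_eq_add_of_le' hn
  rw [Pi.div_apply, Nat.add_sub_cancel, pow_succ, mul_div_cancel_right₀ _ hne]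

lemma tendsto_geom_sum_of_tendsto_zero {𝕜 : Type*} [NormedField 𝕜] {r : ℕ → 𝕜}
    (hr : Tendsto r atTop (𝓝 0)) :
    Tendsto (fun n => ∑ i ∈ range n, r n ^ i) atTop (𝓝 1) := by
  have hsmall : ∀ᶠ n in atTop, ‖r n‖ < 1 := hr.norm.eventually (gt_mem_nhds (by simp))
  have hpow : Tendsto (fun n => r n ^ n) atTop (𝓝 0) := by
    refine squeeze_zero_norm' ?_ (by simpa using hr.norm)
    filter_upwards [hsmall, eventually_ge_atTop 1] with n hn hn1
    rw [norm_pow]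
    exact pow_le_of_le_one (norm_nonneg _) hn.le (by omega)
  have hquot : Tendsto (fun n => (r n ^ n - 1) / (r n - 1)) atTop (𝓝 ((0 - 1) / (0 - 1))) :=
    (hpow.sub_const 1).div (hr.sub_const 1) (by simp)
  rw [div_self (by simp)] at hquot
  refine hquot.congr' ?_
  filter_upwards [hsmall] with n hn
  rw [geom_sum_eq]
  rintro h
  simp [h] at hn

theorem stmt11_general (c : ℝ) :
    (∀ n : ℕ, c < n →
      Pr (fun _ _ : Fin n => 1 - c / n)
          {σ : Orient n | ∃ i : Fin n, ∀ j : Fin n, j ≠ i → beats σ i j}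
        = (1 - c / n) ^ (n - 1) * ∑ i ∈ Finset.range n, (c / ((n : ℝ) - c)) ^ i) ∧
    Filter.Tendsto
      (fun n : ℕ => (1 - c / n) ^ (n - 1) * ∑ i ∈ Finset.range n, (c / ((n : ℝ) - c)) ^ i)
      Filter.atTop (nhds (Real.exp (-c))) := by
  refine ⟨fun n hcn => ?_, ?_⟩
  · obtain rfl | hn := n.eq_zero_or_pos
    · simp [Pr]
    have hq : 1 - c / n ≠ 0 := by
      rw [sub_ne_zero, ne_comm, Ne, div_eq_one_iff_eq (by positivity)]
      exact hcn.ne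
    have hratio : (1 - (1 - c / n)) / (1 - c / n) = c / ((n : ℝ) - c) := by
      field_simp
      ring
    rw [← hratio, ← sum_range_pow_mul_pow_eq_mul_geom_sum hq]
    exact Pr_exists_isCondorcetWinner_const _
  · have hratio : Tendsto (fun n : ℕ => c / ((n : ℝ) - c)) atTop (𝓝 0) :=
      tendsto_const_nhds.div_atTop <|
        tendsto_atTop_add_const_right _ (-c) tendsto_natCast_atTop_atTop
    simpa [sub_eq_add_neg, neg_div] using
      (tendsto_one_add_div_pow_pred_exp (-c)).mul (tendsto_geom_sum_of_tendsto_zero hratio)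

/-- if every edge `a_i → a_j` with `i < j` appears with probability exactly
`1 - c/n` (so each "upset" edge appears with probability `c/n`), `0 ≤ c < n`, then the
probability that the tournament has a Condorcet winner equals
`(1 - c/n)^(n-1) · Σ_{i=0}^{n-1} (c/(n-c))^i`, and this converges to `e^(-c)`. -/
theorem stmt11 (c : ℝ) (hc : 0 ≤ c) :
    (∀ n : ℕ, c < n →
      Pr (fun _ _ : Fin n => 1 - c / n)
          {σ : Orient n | ∃ i : Fin n, ∀ j : Fin n, j ≠ i → beats σ i j}
        = (1 - c / n) ^ (n - 1) * ∑ i ∈ Finset.range n, (c / ((n : ℝ) - c)) ^ i) ∧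
    Filter.Tendsto
      (fun n : ℕ => (1 - c / n) ^ (n - 1) * ∑ i ∈ Finset.range n, (c / ((n : ℝ) - c)) ^ i)
      Filter.atTop (nhds (Real.exp (-c))) :=
  stmt11_general c
end
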